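/- arXiv:2011.04852 — 8 statements merged into one kernel-verified Lean document; each statement's English description precedes it below -/
import Mathlib

section
/- For every λ > 0 and every ν > 1, the Conway–Maxwell–Poisson distribution CMP(λ, ν) is not infinitely divisible. -/
/-!
If `μ = ρ^{*n}`, then `ρ` has no mass on `(-∞, 0)` (else `μ` would, with mass `ρ(-∞,0)^n`), so
`μ{0} = ρ{0}^n` and `ρ{0} > 0`; then `ρ(s) ρ{0}^{n-1} ≤ μ(s)` forces `ρ` to live on `ℕ`. Writing
`aₖ = ρ{k}`, this gives `μ{1} = n a₁ a₀^{n-1}` and `μ{2} ≥ C(n,2) a₁² a₀^{n-2}`, hence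
`C(n,2) μ{1}² ≤ n² μ{0} μ{2}`. Letting `n → ∞`, every infinitely divisible law on `ℕ` with
`μ{0} > 0` satisfies `μ{1}² ≤ 2 μ{0} μ{2}`, whereas for `CMP(λ, ν)` the ratio
`μ{1}² / (μ{0} μ{2})` equals `2^ν > 2`.
-/

open MeasureTheory

/-- The Conway–Maxwell–Poisson distribution `CMP(λ, ν)`, viewed as a measure on `ℝ`
supported on the nonnegative integers: `P(X = k) = (1/Z(λ,ν)) · λ^k/(k!)^ν`. -/
noncomputable def cmpMeasure (lam nu : ℝ) : Measure ℝ :=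
  Measure.sum fun k : ℕ =>
    ENNReal.ofReal ((lam ^ k / (k.factorial : ℝ) ^ nu) /
        ∑' j : ℕ, lam ^ j / (j.factorial : ℝ) ^ nu) • Measure.dirac (k : ℝ)

/-- The `n`-fold convolution of a measure on `ℝ`: the pushforward of the `n`-fold
product measure under summation of coordinates. -/
noncomputable def nfoldConv (n : ℕ) (μ : Measure ℝ) : Measure ℝ :=
  Measure.map (fun x : Fin n → ℝ => ∑ i, x i) (Measure.pi fun _ : Fin n => μ)

/-- A measure `μ` on `ℝ` is infinitely divisible if for every positive integer `n`
there is a probability measure whose `n`-fold convolution equals `μ`. -/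
def InfinitelyDivisible (μ : Measure ℝ) : Prop :=
  ∀ n : ℕ, 0 < n → ∃ ν : Measure ℝ, IsProbabilityMeasure ν ∧ nfoldConv n ν = μ

open Set Finset
open scoped ENNReal

section IndicatorVector

variable {ι : Type*} [DecidableEq ι]

def indicatorVector (T : Finset ι) : ι → ℝ := fun i => if i ∈ T then 1 else 0

lemma indicatorVector_injective : Function.Injective (indicatorVector (ι := ι)) := by
  intro T T' h
  ext i
  have := congrFun h i
  by_cases hT : i ∈ T <;> by_cases hT' : i ∈ T' <;> simp_all [indicatorVector]

variable [Fintype ι]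

lemma sum_indicatorVector (T : Finset ι) : ∑ i, indicatorVector T i = #T := by
  simp [indicatorVector]

lemma eq_indicatorVector_of_forall_eq_zero_or_eq_one {x : ι → ℝ} (h : ∀ i, x i = 0 ∨ x i = 1) :
    x = indicatorVector {i | x i = 1} := by
  ext i
  rcases h i with hi | hi <;> simp [indicatorVector, hi]

variable (ρ : Measure ℝ) [SigmaFinite ρ]

lemma pi_indicatorVector (T : Finset ι) :
    Measure.pi (fun _ : ι => ρ) {indicatorVector T} =
      ρ {1} ^ #T * ρ {0} ^ (Fintype.card ι - #T) := by
  rw [Measure.pi_singleton]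
  simp only [indicatorVector, apply_ite (fun a : ℝ => ρ {a})]
  rw [Finset.prod_ite, Finset.prod_const, Finset.prod_const, Finset.filter_mem_eq_inter,
    Finset.univ_inter, Finset.filter_not, Finset.filter_mem_eq_inter, Finset.univ_inter,
    ← Finset.compl_eq_univ_sdiff, Finset.card_compl]

lemma pi_image_indicatorVector_powersetCard (k : ℕ) :
    Measure.pi (fun _ : ι => ρ) ↑((powersetCard k (univ : Finset ι)).image indicatorVector) =
      (Fintype.card ι).choose k * (ρ {1} ^ k * ρ {0} ^ (Fintype.card ι - k)) := by
  rw [← sum_measure_singleton, Finset.sum_image indicatorVector_injective.injOn,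
    Finset.sum_congr rfl fun T hT => ?_, Finset.sum_const, Finset.card_powersetCard,
    Finset.card_univ, nsmul_eq_mul]
  rw [pi_indicatorVector, (Finset.mem_powersetCard.1 hT).2]

end IndicatorVector

lemma eq_zero_or_eq_one_of_sum_eq_one {ι : Type*} [Fintype ι] {x : ι → ℝ}
    (hx : ∀ i, x i ∈ range ((↑) : ℕ → ℝ)) (h : ∑ i, x i = 1) : ∀ i, x i = 0 ∨ x i = 1 := by
  choose m hm using hx
  intro i
  have hle : x i ≤ 1 :=
    h ▸ Finset.single_le_sum (fun j _ => hm j ▸ Nat.cast_nonneg (m j)) (mem_univ i)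
  rw [← hm i] at hle ⊢
  have : m i ≤ 1 := by exact_mod_cast hle
  interval_cases m i <;> simp

section NFoldConv

variable {n : ℕ} {ρ : Measure ℝ}

lemma measure_pi_preimage_sum_le_nfoldConv (s : Set ℝ) :
    Measure.pi (fun _ : Fin n => ρ) ((fun x => ∑ i, x i) ⁻¹' s) ≤ nfoldConv n ρ s :=
  Measure.le_map_apply (by fun_prop) s

lemma nfoldConv_apply {s : Set ℝ} (hs : MeasurableSet s) :
    nfoldConv n ρ s = Measure.pi (fun _ : Fin n => ρ) ((fun x => ∑ i, x i) ⁻¹' s) :=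
  Measure.map_apply (by fun_prop) hs

variable [SigmaFinite ρ]

lemma measure_Iio_zero_pow_le_nfoldConv (hn : 0 < n) :
    ρ (Iio 0) ^ n ≤ nfoldConv n ρ (Iio 0) := by
  have : Nonempty (Fin n) := ⟨⟨0, hn⟩⟩
  calc ρ (Iio 0) ^ n = Measure.pi (fun _ : Fin n => ρ) (univ.pi fun _ => Iio 0) := by
        simp [Measure.pi_pi]
    _ ≤ Measure.pi (fun _ : Fin n => ρ) ((fun x => ∑ i, x i) ⁻¹' Iio 0) :=
        measure_mono fun x hx => by
          simpa using Finset.sum_lt_sum_of_nonempty univ_nonempty fun i _ =>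
            show x i < 0 from hx i (mem_univ i)
    _ ≤ _ := measure_pi_preimage_sum_le_nfoldConv _

lemma measure_mul_pow_le_nfoldConv (hn : 0 < n) (s : Set ℝ) :
    ρ s * ρ {0} ^ (n - 1) ≤ nfoldConv n ρ s := by
  let i₀ : Fin n := ⟨0, hn⟩
  calc ρ s * ρ {0} ^ (n - 1)
      = Measure.pi (fun _ : Fin n => ρ) (univ.pi (Function.update (fun _ => {0}) i₀ s)) := by
        simp [Measure.pi_pi, Function.apply_update (fun _ => ρ),
          Finset.prod_update_of_mem (mem_univ i₀), Finset.card_sdiff]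
    _ ≤ Measure.pi (fun _ : Fin n => ρ) ((fun x => ∑ i, x i) ⁻¹' s) := measure_mono fun x hx => ?_
    _ ≤ _ := measure_pi_preimage_sum_le_nfoldConv _
  have hx0 : ∀ i ≠ i₀, x i = 0 := fun i hi => by
    simpa [Function.update_of_ne hi] using hx i (mem_univ i)
  have hxs : x i₀ ∈ s := by simpa using hx i₀ (mem_univ i₀)
  simpa [Finset.sum_eq_single i₀ fun i _ hi => hx0 i hi] using hxs

lemma choose_mul_le_nfoldConv_natCast (k : ℕ) :
    n.choose k * (ρ {1} ^ k * ρ {0} ^ (n - k)) ≤ nfoldConv n ρ {(k : ℝ)} := by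
  calc n.choose k * (ρ {1} ^ k * ρ {0} ^ (n - k))
      = Measure.pi (fun _ : Fin n => ρ)
          ↑((powersetCard k (univ : Finset (Fin n))).image indicatorVector) := by
        rw [pi_image_indicatorVector_powersetCard, Fintype.card_fin]
    _ ≤ _ := measure_mono ?_
    _ ≤ _ := measure_pi_preimage_sum_le_nfoldConv _
  intro x hx
  obtain ⟨T, hT, rfl⟩ := Finset.mem_image.1 hx
  simp [sum_indicatorVector, (Finset.mem_powersetCard.1 hT).2]

lemma nfoldConv_natCast_le_choose_mul {s : Set ℝ} (hρ : ρ sᶜ = 0) {k : ℕ}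
    (hs : ∀ x : Fin n → ℝ, (∀ i, x i ∈ s) → ∑ i, x i = k → ∀ i, x i = 0 ∨ x i = 1) :
    nfoldConv n ρ {(k : ℝ)} ≤ n.choose k * (ρ {1} ^ k * ρ {0} ^ (n - k)) := by
  have hae : ∀ᵐ x ∂Measure.pi (fun _ : Fin n => ρ), ∀ i, x i ∈ s :=
    ae_all_iff.2 fun i => (Measure.quasiMeasurePreserving_eval _ i).ae (ae_iff.2 hρ)
  have hbox := pi_image_indicatorVector_powersetCard (ι := Fin n) ρ k
  rw [Fintype.card_fin] at hbox
  rw [nfoldConv_apply (measurableSet_singleton _), ← hbox]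
  refine measure_mono_ae (hae.mono fun x hx hxk => ?_)
  have hsum : ∑ i, x i = k := hxk
  have hx01 := eq_indicatorVector_of_forall_eq_zero_or_eq_one (hs x hx hsum)
  rw [hx01, Finset.coe_image]
  rw [hx01] at hsum
  refine ⟨_, Finset.mem_powersetCard.2 ⟨Finset.subset_univ _, ?_⟩, rfl⟩
  exact_mod_cast (sum_indicatorVector _).symm.trans hsum

lemma nfoldConv_singleton_zero_le (hρ : ρ (Iio 0) = 0) : nfoldConv n ρ {0} ≤ ρ {0} ^ n := by
  rw [← compl_Ici] at hρ
  simpa using nfoldConv_natCast_le_choose_mul hρ (k := 0) fun x hx hsum i =>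
    Or.inl ((Finset.sum_eq_zero_iff_of_nonneg fun i _ => hx i).1 (by simpa using hsum) i
      (mem_univ i))

lemma nfoldConv_singleton_one_le (hρ : ρ (range ((↑) : ℕ → ℝ))ᶜ = 0) :
    nfoldConv n ρ {1} ≤ n * (ρ {1} * ρ {0} ^ (n - 1)) := by
  simpa using nfoldConv_natCast_le_choose_mul hρ (k := 1) fun x hx hsum =>
    eq_zero_or_eq_one_of_sum_eq_one hx (by simpa using hsum)

lemma measure_compl_range_natCast_eq_zero_of_nfoldConv (hn : 0 < n)
    (hℕ : nfoldConv n ρ (range ((↑) : ℕ → ℝ))ᶜ = 0) (h0 : nfoldConv n ρ {0} ≠ 0) :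
    ρ (range ((↑) : ℕ → ℝ))ᶜ = 0 := by
  have hsub : Iio (0 : ℝ) ⊆ (range ((↑) : ℕ → ℝ))ᶜ := by
    rintro x (hx : x < 0) ⟨k, rfl⟩
    exact (Nat.cast_nonneg k).not_gt hx
  have hneg : ρ (Iio 0) = 0 := by
    have := measure_Iio_zero_pow_le_nfoldConv (ρ := ρ) hn
    rwa [measure_mono_null hsub hℕ, nonpos_iff_eq_zero, pow_eq_zero_iff hn.ne'] at this
  have ha0 : ρ {0} ^ (n - 1) ≠ 0 :=
    pow_ne_zero _ fun h => h0 (by simpa [h, hn.ne'] using nfoldConv_singleton_zero_le (n := n) hneg)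
  have := measure_mul_pow_le_nfoldConv (ρ := ρ) hn (range ((↑) : ℕ → ℝ))ᶜ
  rwa [hℕ, nonpos_iff_eq_zero, mul_eq_zero, or_iff_left ha0] at this

end NFoldConv

lemma le_two_mul_of_forall_choose_two_mul_le {x y : ℝ}
    (h : ∀ n : ℕ, 0 < n → (n.choose 2 : ℝ) * x ≤ n ^ 2 * y) : x ≤ 2 * y := by
  by_contra! hxy
  obtain ⟨n, hn⟩ := exists_nat_gt (x / (x - 2 * y))
  have hn' : x < n * (x - 2 * y) := (div_lt_iff₀ (by linarith)).1 hn
  have := h (n + 1) n.succ_pos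
  rw [Nat.cast_choose_two] at this
  push_cast at this
  nlinarith

section InfinitelyDivisible

variable {μ : Measure ℝ}

lemma InfinitelyDivisible.isProbabilityMeasure (h : InfinitelyDivisible μ) :
    IsProbabilityMeasure μ := by
  obtain ⟨ρ, hρ, rfl⟩ := h 1 one_pos
  exact Measure.isProbabilityMeasure_map (by fun_prop)

theorem InfinitelyDivisible.choose_two_mul_sq_le (h : InfinitelyDivisible μ)
    (hℕ : μ (range ((↑) : ℕ → ℝ))ᶜ = 0) (h0 : μ {0} ≠ 0) {n : ℕ} (hn : 0 < n) :
    n.choose 2 * μ {1} ^ 2 ≤ n ^ 2 * (μ {0} * μ {2}) := by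
  obtain ⟨ρ, hρ, rfl⟩ := h n hn
  have hρℕ := measure_compl_range_natCast_eq_zero_of_nfoldConv hn hℕ h0
  have hp0 : ρ {0} ^ n ≤ nfoldConv n ρ {0} := by
    simpa using choose_mul_le_nfoldConv_natCast (ρ := ρ) (n := n) 0
  have hp2 : n.choose 2 * (ρ {1} ^ 2 * ρ {0} ^ (n - 2)) ≤ nfoldConv n ρ {2} := by
    simpa using choose_mul_le_nfoldConv_natCast (ρ := ρ) (n := n) 2
  calc (n.choose 2 : ℝ≥0∞) * nfoldConv n ρ {1} ^ 2
      ≤ n.choose 2 * (n * (ρ {1} * ρ {0} ^ (n - 1))) ^ 2 := by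
        gcongr; exact nfoldConv_singleton_one_le hρℕ
    _ = n ^ 2 * (ρ {0} ^ n * (n.choose 2 * (ρ {1} ^ 2 * ρ {0} ^ (n - 2)))) := by
      rcases lt_or_ge n 2 with hn2 | hn2
      · simp [Nat.choose_eq_zero_of_lt hn2]
      · rw [show ρ {0} ^ n * (n.choose 2 * (ρ {1} ^ 2 * ρ {0} ^ (n - 2))) =
            n.choose 2 * ρ {1} ^ 2 * ρ {0} ^ (n - 2 + n) by ring,
          show n - 2 + n = (n - 1) * 2 by omega]
        ring
    _ ≤ n ^ 2 * (nfoldConv n ρ {0} * nfoldConv n ρ {2}) := by gcongr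

theorem InfinitelyDivisible.measureReal_one_sq_le (h : InfinitelyDivisible μ)
    (hℕ : μ (range ((↑) : ℕ → ℝ))ᶜ = 0) (h0 : μ {0} ≠ 0) :
    μ.real {1} ^ 2 ≤ 2 * (μ.real {0} * μ.real {2}) := by
  have := h.isProbabilityMeasure
  refine le_two_mul_of_forall_choose_two_mul_le fun n hn => ?_
  have := ENNReal.toReal_mono (by finiteness) (h.choose_two_mul_sq_le hℕ h0 hn)
  simpa [measureReal_def, ENNReal.toReal_mul, ENNReal.toReal_pow] using this

end InfinitelyDivisible

section ConwayMaxwellPoisson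

variable {lam nu : ℝ}

noncomputable def cmpWeight (lam nu : ℝ) (k : ℕ) : ℝ := lam ^ k / (k.factorial : ℝ) ^ nu

lemma cmpWeight_nonneg (hlam : 0 ≤ lam) (k : ℕ) : 0 ≤ cmpWeight lam nu k := by
  unfold cmpWeight; positivity

lemma cmpWeight_pos (hlam : 0 < lam) (k : ℕ) : 0 < cmpWeight lam nu k := by
  unfold cmpWeight; positivity

lemma summable_cmpWeight (hlam : 0 ≤ lam) (hnu : 1 ≤ nu) : Summable (cmpWeight lam nu) := by
  refine (Real.summable_pow_div_factorial lam).of_nonneg_of_le (cmpWeight_nonneg hlam) fun k => ?_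
  calc cmpWeight lam nu k ≤ lam ^ k / (k.factorial : ℝ) ^ (1 : ℝ) := by
        unfold cmpWeight
        gcongr
        exact_mod_cast k.factorial_pos
    _ = lam ^ k / k.factorial := by rw [Real.rpow_one]

lemma tsum_cmpWeight_pos (hlam : 0 ≤ lam) (hnu : 1 ≤ nu) : 0 < ∑' k, cmpWeight lam nu k :=
  (summable_cmpWeight hlam hnu).tsum_pos (cmpWeight_nonneg hlam) 0 (by simp [cmpWeight])

lemma cmpMeasure_natCast_singleton (k : ℕ) :
    cmpMeasure lam nu {(k : ℝ)} =
      ENNReal.ofReal (cmpWeight lam nu k / ∑' j, cmpWeight lam nu j) := by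
  simp [cmpMeasure, Measure.sum_apply _ (measurableSet_singleton _), Set.indicator, cmpWeight]

lemma cmpMeasure_compl_range_natCast (lam nu : ℝ) :
    cmpMeasure lam nu (range ((↑) : ℕ → ℝ))ᶜ = 0 := by
  simp [cmpMeasure, Measure.sum_apply _ (countable_range _).measurableSet.compl]

lemma cmpMeasure_real_natCast_singleton (hlam : 0 ≤ lam) (k : ℕ) :
    (cmpMeasure lam nu).real {(k : ℝ)} = cmpWeight lam nu k / ∑' j, cmpWeight lam nu j := by
  rw [measureReal_def, cmpMeasure_natCast_singleton, ENNReal.toReal_ofReal]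
  exact div_nonneg (cmpWeight_nonneg hlam k) (tsum_nonneg (cmpWeight_nonneg hlam))

lemma cmpMeasure_real_one_sq (hlam : 0 ≤ lam) :
    (cmpMeasure lam nu).real {1} ^ 2 =
      2 ^ nu * ((cmpMeasure lam nu).real {0} * (cmpMeasure lam nu).real {2}) := by
  have h := cmpMeasure_real_natCast_singleton (nu := nu) hlam
  have h0 := h 0; have h1 := h 1; have h2 := h 2
  simp only [Nat.cast_zero, Nat.cast_one, Nat.cast_ofNat] at h0 h1 h2
  rw [h0, h1, h2]
  have : (2 : ℝ) ^ nu ≠ 0 := by positivity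
  simp [cmpWeight, Nat.factorial]
  field_simp

end ConwayMaxwellPoisson

/-- For every `λ > 0` and every `ν > 1`, the Conway–Maxwell–Poisson distribution
`CMP(λ, ν)` is not infinitely divisible. -/
theorem cmp_not_infinitelyDivisible_of_one_lt (lam nu : ℝ)
    (hlam : 0 < lam) (hnu : 1 < nu) :
    ¬ InfinitelyDivisible (cmpMeasure lam nu) := by
  intro hID
  have hp (k : ℕ) : 0 < (cmpMeasure lam nu).real {(k : ℝ)} := by
    rw [cmpMeasure_real_natCast_singleton hlam.le]
    exact div_pos (cmpWeight_pos hlam k) (tsum_cmpWeight_pos hlam.le hnu.le)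
  have h0 : cmpMeasure lam nu {0} ≠ 0 := fun h => (hp 0).ne' (by simp [measureReal_def, h])
  have key := hID.measureReal_one_sq_le (cmpMeasure_compl_range_natCast lam nu) h0
  rw [cmpMeasure_real_one_sq hlam.le] at key
  have h02 : 0 < (cmpMeasure lam nu).real {0} * (cmpMeasure lam nu).real {2} := by
    simpa using mul_pos (hp 0) (hp 2)
  have h2nu : (2 : ℝ) < 2 ^ nu := by
    simpa using Real.rpow_lt_rpow_of_exponent_lt one_lt_two hnu
  linarith [le_of_mul_le_mul_right key h02]
end

section
/- Let λ > 0, ν ∈ (0,1), μ > 0, and let (q_r)_{r≥1} be nonnegative reals with Σ_{r≥1} q_r = 1. Define the power series G(z) = Σ_{r≥1} q_r z^r with radius of convergence R, and the entire function F(z) = Σ_{k≥0} (λz)^k/(k!)^ν. If exp(μ G(z)) = F(z) for all complex z with |z| < R, then R = ∞, i.e., G is an entire function. -/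
/-!
Since `G(0) = 0`, the Taylor coefficients of `exp (μ G)` at `0` are given by Faà di Bruno's
formula: the `n`-th one is a sum over the compositions of `n`, and the one-block composition
contributes `μ q_n`. All terms are nonnegative because the `q_r` are, so comparing coefficients
in `exp (μ G) = F` gives `μ q_n ≤ λ^n / (n!)^ν`. The right-hand sides are the Taylor
coefficients of the entire function `F`, hence `G` is entire as well.
-/

open scoped ENNReal

/-- The radius of convergence of the power series `Σ_k a_k z^k`: the supremum of `|z|`
over those `z` at which the series converges. -/
noncomputable def radiusOfConv (a : ℕ → ℂ) : ℝ≥0∞ :=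
  ⨆ (z : ℂ) (_ : Summable fun k => a k * z ^ k), (‖z‖₊ : ℝ≥0∞)

open scoped Nat
open Filter Topology FormalMultilinearSeries NormedSpace

theorem coeff_expSeries_comp_ofScalars {𝕜 : Type*} [NontriviallyNormedField 𝕜] [CharZero 𝕜]
    (c : ℕ → 𝕜) (n : ℕ) :
    ((expSeries 𝕜 𝕜).comp (ofScalars 𝕜 c)).coeff n =
      ∑ σ : Composition n, (σ.length ! : 𝕜)⁻¹ * ∏ i, c (σ.blocksFun i) := by
  simp only [FormalMultilinearSeries.coeff, FormalMultilinearSeries.comp, sum_apply,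
    compAlongComposition_apply]
  refine Finset.sum_congr rfl fun σ _ => ?_
  simp [applyComposition, ofScalars, expSeries, List.prod_ofFn]

theorem le_sum_compositions_inv_factorial_mul_prod {c : ℕ → ℝ} (hc : ∀ k, 0 ≤ c k)
    (hc0 : c 0 = 0) (n : ℕ) :
    c n ≤ ∑ σ : Composition n, (σ.length ! : ℝ)⁻¹ * ∏ i, c (σ.blocksFun i) := by
  have hterm (σ : Composition n) : 0 ≤ (σ.length ! : ℝ)⁻¹ * ∏ i, c (σ.blocksFun i) :=
    mul_nonneg (by positivity) (Finset.prod_nonneg fun i _ => hc _)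
  rcases Nat.eq_zero_or_pos n with rfl | hn
  · exact hc0 ▸ Finset.sum_nonneg fun σ _ => hterm σ
  · calc c n = ((Composition.single n hn).length ! : ℝ)⁻¹ *
          ∏ i, c ((Composition.single n hn).blocksFun i) := by
          rw [Finset.prod_congr rfl fun i _ => congrArg c (Composition.single_blocksFun hn i),
            Finset.prod_const, Finset.card_univ, Fintype.card_fin, Composition.single_length]
          simp
      _ ≤ _ := Finset.single_le_sum (fun σ _ => hterm σ) (Finset.mem_univ _)

theorem le_of_exp_ofScalarsSum_eventuallyEq {c d : ℕ → ℝ} (hc : ∀ k, 0 ≤ c k)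
    (hc0 : c 0 = 0)
    (hcr : 0 < (ofScalars ℂ fun k => (c k : ℂ)).radius)
    (hdr : 0 < (ofScalars ℂ fun k => (d k : ℂ)).radius)
    (h : ∀ᶠ z in 𝓝 0, Complex.exp (ofScalarsSum (fun k => (c k : ℂ)) z) =
      ofScalarsSum (fun k => (d k : ℂ)) z)
    (n : ℕ) : c n ≤ d n := by
  have hG := ((ofScalars ℂ fun k => (c k : ℂ)).hasFPowerSeriesOnBall hcr).hasFPowerSeriesAt
  have hF := ((ofScalars ℂ fun k => (d k : ℂ)).hasFPowerSeriesOnBall hdr).hasFPowerSeriesAt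
  have hG0 : ofScalarsSum (fun k => (c k : ℂ)) (0 : ℂ) = 0 := by simp [hc0]
  have hexpG := (hG0 ▸ exp_hasFPowerSeriesAt_zero (𝕂 := ℂ) (𝔸 := ℂ)).comp hG
  rw [← Complex.exp_eq_exp_ℂ] at hexpG
  have hseries := hexpG.eq_formalMultilinearSeries_of_eventually hF h
  have hcoeff := congrArg (·.coeff n) hseries
  simp only [coeff_expSeries_comp_ofScalars, coeff_ofScalars] at hcoeff
  refine (le_sum_compositions_inv_factorial_mul_prod hc hc0 n).trans_eq
    (Complex.ofReal_injective ?_)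
  push_cast
  exact hcoeff

theorem radius_ofScalars_le_radiusOfConv (a : ℕ → ℂ) :
    (ofScalars ℂ a).radius ≤ radiusOfConv a := by
  refine ENNReal.le_of_forall_nnreal_lt fun r hr => ?_
  have hsum : Summable fun k => a k * (r : ℂ) ^ k := by
    refine Summable.of_norm ?_
    simpa [ofScalars_norm] using (ofScalars ℂ a).summable_norm_mul_pow hr
  simpa [radiusOfConv] using
    le_iSup₂ (f := fun (z : ℂ) (_ : Summable fun k => a k * z ^ k) => (‖z‖₊ : ℝ≥0∞))
      (r : ℂ) hsum

theorem radius_ofScalars_pow_div_factorial_rpow {x ν : ℝ} (hx : x ≠ 0) (hν : 0 < ν) :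
    (ofScalars ℂ fun n => ((x ^ n / (n ! : ℝ) ^ ν : ℝ) : ℂ)).radius = ⊤ := by
  have hratio (n : ℕ) : ‖((x ^ (n + 1) / ((n + 1) ! : ℝ) ^ ν : ℝ) : ℂ)‖ /
      ‖((x ^ n / (n ! : ℝ) ^ ν : ℝ) : ℂ)‖ = |x| / ((n : ℝ) + 1) ^ ν := by
    have hfact : ((n + 1)! : ℝ) ^ ν = ((n : ℝ) + 1) ^ ν * (n ! : ℝ) ^ ν := by
      rw [Nat.factorial_succ, Nat.cast_mul, Nat.cast_succ,
        Real.mul_rpow (by positivity) (by positivity)]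
    have hpos : (0 : ℝ) < (n ! : ℝ) ^ ν := by positivity
    have hpos' : (0 : ℝ) < ((n : ℝ) + 1) ^ ν := by positivity
    simp only [Complex.norm_real, Real.norm_eq_abs, abs_div, abs_pow, hfact,
      abs_of_pos hpos, abs_of_pos hpos', abs_mul]
    field_simp
    ring
  refine ofScalars_radius_eq_top_of_tendsto ℂ _ (Eventually.of_forall fun n => ?_) ?_
  · exact Complex.ofReal_ne_zero.mpr (by positivity)
  · simp_rw [Nat.succ_eq_add_one, hratio]
    exact tendsto_const_nhds.div_atTop <| (tendsto_rpow_atTop hν).comp <|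
      tendsto_natCast_atTop_atTop.atTop_add tendsto_const_nhds

theorem one_le_radius_ofScalars_of_summable {c : ℕ → ℝ} (hc : ∀ n, 0 ≤ c n)
    (hs : Summable c) :
    1 ≤ (ofScalars ℂ fun n => (c n : ℂ)).radius := by
  simpa using (ofScalars ℂ fun n => (c n : ℂ)).le_radius_of_summable (r := 1)
    (by simpa [ofScalars_norm, fun n => abs_of_nonneg (hc n)] using hs)

theorem radius_ofScalars_eq_top_of_mul_le {c d : ℕ → ℝ} {C : ℝ} (hC : 0 < C)
    (hc : ∀ n, 0 ≤ c n) (hcd : ∀ n, C * c n ≤ d n)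
    (hd : (ofScalars ℂ fun n => (d n : ℂ)).radius = ⊤) :
    (ofScalars ℂ fun n => (c n : ℂ)).radius = ⊤ := by
  have hCc : (ofScalars ℂ fun n => ((C * c n : ℝ) : ℂ)) =
      (C : ℂ) • ofScalars ℂ fun n => (c n : ℂ) := by
    rw [← ofScalars_smul]
    congr 1
    ext n
    simp
  rw [← radius_smul_eq _ (Complex.ofReal_ne_zero.mpr hC.ne'), ← hCc, eq_top_iff, ← hd]
  refine radius_le_of_le fun n => ?_
  simp only [ofScalars_norm, Complex.norm_real, Real.norm_eq_abs]
  exact abs_le_abs_of_nonneg (mul_nonneg hC.le (hc n)) (hcd n)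

/-- Let `λ > 0`, `ν ∈ (0,1)`, `μ > 0`, and `(q_r)_{r ≥ 1}` nonnegative reals summing
to `1`.  If `exp(μ · Σ_{r≥1} q_r z^r) = Σ_{k≥0} (λz)^k/(k!)^ν` for all complex `z`
with `|z|` less than the radius of convergence `R` of `G(z) = Σ_{r≥1} q_r z^r`, then
`R = ∞`, i.e. `G` is an entire function. -/
theorem radius_eq_top_of_exp_eq (lam nu μ : ℝ)
    (hlam : 0 < lam) (hnu : nu ∈ Set.Ioo (0 : ℝ) 1) (hμ : 0 < μ)
    (q : ℕ → ℝ) (hq0 : q 0 = 0) (hq : ∀ r, 0 ≤ q r) (hqsum : ∑' r, q r = 1)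
    (heq : ∀ z : ℂ, (‖z‖₊ : ℝ≥0∞) < radiusOfConv (fun r => (q r : ℂ)) →
      Complex.exp ((μ : ℂ) * ∑' r : ℕ, (q r : ℂ) * z ^ r)
        = ∑' k : ℕ, ((lam : ℂ) * z) ^ k / (((k.factorial : ℝ) ^ nu : ℝ) : ℂ)) :
    radiusOfConv (fun r => (q r : ℂ)) = ⊤ := by
  set d : ℕ → ℝ := fun n => lam ^ n / (n ! : ℝ) ^ nu
  have hqs : Summable q := by
    by_contra h
    simp [tsum_eq_zero_of_not_summable h] at hqsum
  have hGr := one_le_radius_ofScalars_of_summable hq hqs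
  have hFr : (ofScalars ℂ fun n => (d n : ℂ)).radius = ⊤ :=
    radius_ofScalars_pow_div_factorial_rpow hlam.ne' hnu.1
  have hexp : ∀ᶠ z in 𝓝 0, Complex.exp (ofScalarsSum (fun k => ((μ * q k : ℝ) : ℂ)) z) =
      ofScalarsSum (fun k => (d k : ℂ)) z := by
    filter_upwards [Metric.eball_mem_nhds (0 : ℂ) (zero_lt_one.trans_le hGr)] with z hz
    have hzR : (‖z‖₊ : ℝ≥0∞) < radiusOfConv (fun r => (q r : ℂ)) :=
      lt_of_lt_of_le (by simpa [enorm_eq_nnnorm] using hz) (radius_ofScalars_le_radiusOfConv _)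
    simp only [ofScalarsSum_eq_tsum, smul_eq_mul, Complex.ofReal_mul, mul_assoc, tsum_mul_left,
      heq z hzR]
    refine tsum_congr fun k => ?_
    simp only [d]
    push_cast
    ring
  have hμq : ∀ k, 0 ≤ μ * q k := fun k => mul_nonneg hμ.le (hq k)
  have hcoeff (n : ℕ) : μ * q n ≤ d n :=
    le_of_exp_ofScalarsSum_eventuallyEq hμq (by simp [hq0])
      (zero_lt_one.trans_le (one_le_radius_ofScalars_of_summable hμq (hqs.mul_left μ)))
      (hFr ▸ ENNReal.zero_lt_top) hexp n
  exact top_le_iff.mp <|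
    radius_ofScalars_eq_top_of_mul_le hμ hq hcoeff hFr ▸ radius_ofScalars_le_radiusOfConv _
end

section
/- Let ν ∈ (0,1), λ > 0, and set M = λ·ν^ν and F(R) = Σ_{k≥0} (λR)^k/(k!)^ν for R > 0. There exist a constant C > 0 and two real polynomials p₁, p₂ with positive coefficients such that C·R^{−1/ν}·e^{(MR)^{1/ν}} − p₁(R) ≤ F(R) ≤ p₂(R)·e^{(MR)^{1/ν}} for all R > 0 with MR > 1. -/
/-- A real polynomial with positive coefficients: it is nonzero and every coefficient
appearing in it is positive. -/
def Polynomial.PosCoeffs (p : Polynomial ℝ) : Prop :=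
  p ≠ 0 ∧ ∀ i ∈ p.support, 0 < p.coeff i

/-!
Write `λR = A ^ ν`, so that `(MR) ^ (1/ν) = νA` and `F(R) = ∑ (A ^ k / k!) ^ ν`. Since `t ↦ t ^ ν`
is subadditive, `F(R) ≥ (∑ A ^ k / k!) ^ ν = e ^ (νA)`. For the upper bound, split
`A ^ ν = y ^ ν z ^ (1 - ν)` with `y = A + 1` and `z = (A / (A + 1)) ^ (ν / (1 - ν))`: Hölder's
inequality with exponents `1/ν`, `1/(1-ν)` against the exponential series at `y` and the geometric
series at `z` gives `F(R) ≤ e ^ (ν(A + 1)) (1 - z) ^ (ν - 1)`, and `1 - z ≥ ν / (A + 1)`, so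
`F(R) ≤ (e ^ ν / ν) (A + 1) e ^ (νA)` where `A + 1` is bounded by a monomial in `R`.
-/

open Real
open scoped Nat

namespace Real

theorem rpow_tsum_le_tsum_rpow {ι : Type*} {f : ι → ℝ} {p : ℝ} (hf : ∀ i, 0 ≤ f i)
    (hfs : Summable f) (hp0 : 0 < p) (hp1 : p ≤ 1) (hfp : Summable fun i ↦ f i ^ p) :
    (∑' i, f i) ^ p ≤ ∑' i, f i ^ p := by
  set S := ∑' i, f i
  have hS0 : 0 ≤ S := tsum_nonneg hf
  rcases hS0.eq_or_lt with hS | hS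
  · rw [← hS, zero_rpow hp0.ne']
    exact tsum_nonneg fun i ↦ rpow_nonneg (hf i) p
  have hterm : ∀ i, S ^ (p - 1) * f i ≤ f i ^ p := fun i ↦ by
    rcases (hf i).eq_or_lt with h | h
    · rw [← h, zero_rpow hp0.ne', mul_zero]
    calc S ^ (p - 1) * f i ≤ f i ^ (p - 1) * f i :=
          mul_le_mul_of_nonneg_right
            (rpow_le_rpow_of_nonpos h (hfs.le_tsum i fun j _ ↦ hf j) (by linarith)) (hf i)
      _ = f i ^ p := by rw [← rpow_add_one h.ne', sub_add_cancel]
  calc S ^ p = ∑' i, S ^ (p - 1) * f i := by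
        rw [tsum_mul_left, ← rpow_add_one hS.ne', sub_add_cancel]
    _ ≤ ∑' i, f i ^ p := (hfs.mul_left _).tsum_le_tsum hterm hfp

theorem summable_and_tsum_rpow_mul_rpow_le {ι : Type*} {f g : ι → ℝ} {p : ℝ} (hp0 : 0 < p)
    (hp1 : p < 1) (hf : ∀ i, 0 ≤ f i) (hg : ∀ i, 0 ≤ g i) (hfs : Summable f)
    (hgs : Summable g) :
    (Summable fun i ↦ f i ^ p * g i ^ (1 - p)) ∧
      ∑' i, f i ^ p * g i ^ (1 - p) ≤ (∑' i, f i) ^ p * (∑' i, g i) ^ (1 - p) := by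
  have hq0 : 1 - p ≠ 0 := by linarith
  simpa [rpow_rpow_inv (hf _) hp0.ne', rpow_rpow_inv (hg _) hq0] using
    summable_and_inner_le_Lp_mul_Lq_tsum_of_nonneg (HolderConjugate.inv_one_sub_inv hp0 hp1)
      (fun i ↦ rpow_nonneg (hf i) p) (fun i ↦ rpow_nonneg (hg i) (1 - p))
      (by simpa [rpow_rpow_inv (hf _) hp0.ne'] using hfs)
      (by simpa [rpow_rpow_inv (hg _) hq0] using hgs)

theorem mul_one_sub_le_one_sub_rpow {w c d : ℝ} (hw0 : 0 ≤ w) (hw1 : w ≤ 1) (hd0 : 0 ≤ d)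
    (hd1 : d ≤ 1) (hdc : d ≤ c) : d * (1 - w) ≤ 1 - w ^ c := by
  rcases le_total c 1 with hc1 | hc1
  · have := rpow_one_add_le_one_add_mul_self (s := w - 1) (by linarith) (hd0.trans hdc) hc1
    rw [add_sub_cancel] at this
    nlinarith
  · have := rpow_le_rpow_of_exponent_ge' hw0 hw1 zero_le_one hc1
    rw [rpow_one] at this
    nlinarith

theorem tsum_pow_div_factorial (a : ℝ) : ∑' k : ℕ, a ^ k / (k ! : ℝ) = exp a := by
  rw [exp_eq_exp_ℝ, NormedSpace.exp_eq_tsum_div]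

theorem pow_div_factorial_rpow {a : ℝ} (ha : 0 ≤ a) (ν : ℝ) (k : ℕ) :
    (a ^ k / (k ! : ℝ)) ^ ν = (a ^ ν) ^ k / (k ! : ℝ) ^ ν := by
  rw [div_rpow (pow_nonneg ha k) (Nat.cast_nonneg _), rpow_pow_comm ha]

end Real

section

variable {ν : ℝ}

theorem summable_and_tsum_rpow_mul_rpow_pow_div_factorial_rpow_le (hν0 : 0 < ν) (hν1 : ν < 1)
    {y z : ℝ} (hy : 0 ≤ y) (hz0 : 0 ≤ z) (hz1 : z < 1) :
    (Summable fun k : ℕ ↦ (y ^ ν * z ^ (1 - ν)) ^ k / (k ! : ℝ) ^ ν) ∧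
      ∑' k : ℕ, (y ^ ν * z ^ (1 - ν)) ^ k / (k ! : ℝ) ^ ν
        ≤ exp (ν * y) * (1 - z)⁻¹ ^ (1 - ν) := by
  have hterm : (fun k : ℕ ↦ (y ^ ν * z ^ (1 - ν)) ^ k / (k ! : ℝ) ^ ν) =
      fun k ↦ (y ^ k / (k ! : ℝ)) ^ ν * (z ^ k) ^ (1 - ν) := by
    ext k
    rw [pow_div_factorial_rpow hy, ← rpow_pow_comm hz0, mul_pow]
    ring
  rw [hterm, ← tsum_geometric_of_lt_one hz0 hz1, mul_comm ν, exp_mul, ← tsum_pow_div_factorial]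
  exact summable_and_tsum_rpow_mul_rpow_le hν0 hν1 (fun k ↦ by positivity)
    (fun k ↦ pow_nonneg hz0 k) (summable_pow_div_factorial y)
    (summable_geometric_of_lt_one hz0 hz1)

theorem summable_and_tsum_pow_div_factorial_rpow_le (hν0 : 0 < ν) (hν1 : ν < 1) {a : ℝ}
    (ha : 0 ≤ a) :
    (Summable fun k : ℕ ↦ (a ^ ν) ^ k / (k ! : ℝ) ^ ν) ∧
      ∑' k : ℕ, (a ^ ν) ^ k / (k ! : ℝ) ^ ν ≤ exp ν / ν * (a + 1) * exp (ν * a) := by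
  have ha1 : 0 < a + 1 := by linarith
  set w := a / (a + 1)
  have hw0 : 0 ≤ w := by positivity
  have hw1 : w < 1 := (div_lt_one ha1).mpr (lt_add_one a)
  set z := w ^ (ν / (1 - ν))
  have hz0 : 0 ≤ z := by positivity
  have hz1 : z < 1 := rpow_lt_one hw0 hw1 (div_pos hν0 (by linarith))
  have hyz : (a + 1) ^ ν * z ^ (1 - ν) = a ^ ν := by
    rw [← rpow_mul hw0, div_mul_cancel₀ _ (by linarith), ← mul_rpow ha1.le hw0,
      mul_div_cancel₀ _ ha1.ne']
  have hgap : ν / (a + 1) ≤ 1 - z := by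
    have hνc : ν ≤ ν / (1 - ν) := (le_div_iff₀ (by linarith)).mpr (by nlinarith)
    have := mul_one_sub_le_one_sub_rpow hw0 hw1.le hν0.le hν1.le hνc
    rwa [one_sub_div ha1.ne', add_sub_cancel_left, mul_one_div] at this
  have hgeom : (1 - z)⁻¹ ^ (1 - ν) ≤ (a + 1) / ν := by
    have h1 : 1 ≤ (1 - z)⁻¹ := one_le_inv₀ (by linarith) |>.mpr (by linarith)
    calc (1 - z)⁻¹ ^ (1 - ν) ≤ (1 - z)⁻¹ := by
          simpa using rpow_le_rpow_of_exponent_le h1 (by linarith : 1 - ν ≤ 1)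
      _ ≤ (ν / (a + 1))⁻¹ := inv_anti₀ (by positivity) hgap
      _ = (a + 1) / ν := inv_div _ _
  obtain ⟨hs, hle⟩ := summable_and_tsum_rpow_mul_rpow_pow_div_factorial_rpow_le hν0 hν1 ha1.le
    hz0 hz1
  rw [hyz] at hs hle
  refine ⟨hs, hle.trans ?_⟩
  calc exp (ν * (a + 1)) * (1 - z)⁻¹ ^ (1 - ν) ≤ exp (ν * (a + 1)) * ((a + 1) / ν) := by gcongr
    _ = exp ν / ν * (a + 1) * exp (ν * a) := by rw [mul_add_one, exp_add]; ring

theorem exp_mul_le_tsum_pow_div_factorial_rpow (hν0 : 0 < ν) (hν1 : ν < 1) {a : ℝ}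
    (ha : 0 ≤ a) : exp (ν * a) ≤ ∑' k : ℕ, (a ^ ν) ^ k / (k ! : ℝ) ^ ν := by
  have hs := (summable_and_tsum_pow_div_factorial_rpow_le hν0 hν1 ha).1
  simp_rw [← pow_div_factorial_rpow ha] at hs ⊢
  rw [mul_comm, exp_mul, ← tsum_pow_div_factorial]
  exact rpow_tsum_le_tsum_rpow (fun k ↦ by positivity) (summable_pow_div_factorial a) hν0 hν1.le hs

theorem rpow_one_div_add_one_le (hν0 : 0 < ν) {x : ℝ} (hx : 1 ≤ x) :
    x ^ (1 / ν) + 1 ≤ 2 * x ^ ⌈1 / ν⌉₊ := by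
  have h1 : 1 ≤ x ^ (1 / ν) := one_le_rpow hx (by positivity)
  have h2 : x ^ (1 / ν) ≤ x ^ ⌈1 / ν⌉₊ := by
    rw [← rpow_natCast]
    exact rpow_le_rpow_of_exponent_le hx (Nat.le_ceil _)
  linarith

theorem Polynomial.posCoeffs_C_mul_X_pow {c : ℝ} (hc : 0 < c) (n : ℕ) :
    (Polynomial.C c * Polynomial.X ^ n).PosCoeffs := by
  refine ⟨by simp [hc.ne'], fun i hi ↦ ?_⟩
  rw [support_C_mul_X_pow n hc.ne', Finset.mem_singleton] at hi
  simp [hi, hc]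

end

open Polynomial in
/-- Let `ν ∈ (0,1)`, `λ > 0`, `M = λ·ν^ν`, and `F(R) = Σ_{k≥0} (λR)^k/(k!)^ν`.  There
exist `C > 0` and polynomials `p₁, p₂` with positive coefficients such that
`C·R^(−1/ν)·e^((MR)^(1/ν)) − p₁(R) ≤ F(R) ≤ p₂(R)·e^((MR)^(1/ν))` whenever `R > 0` and
`MR > 1`. -/
theorem cmp_partition_growth (nu lam : ℝ) (hnu : nu ∈ Set.Ioo (0 : ℝ) 1)
    (hlam : 0 < lam) :
    ∃ C : ℝ, 0 < C ∧ ∃ p₁ p₂ : Polynomial ℝ, p₁.PosCoeffs ∧ p₂.PosCoeffs ∧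
      ∀ R : ℝ, 0 < R → 1 < lam * nu ^ nu * R →
        C * R ^ (-(1 / nu)) * Real.exp ((lam * nu ^ nu * R) ^ (1 / nu)) - p₁.eval R
            ≤ ∑' k : ℕ, (lam * R) ^ k / (k.factorial : ℝ) ^ nu ∧
          ∑' k : ℕ, (lam * R) ^ k / (k.factorial : ℝ) ^ nu
            ≤ p₂.eval R * Real.exp ((lam * nu ^ nu * R) ^ (1 / nu)) := by
  obtain ⟨hν0, hν1⟩ := hnu
  set n := ⌈1 / nu⌉₊
  refine ⟨(lam * nu ^ nu) ^ (-(1 / nu)), by positivity, 1, C (2 * exp nu / nu * lam ^ n) * X ^ n,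
    by simpa using posCoeffs_C_mul_X_pow one_pos 0, posCoeffs_C_mul_X_pow (by positivity) n,
    fun R hR hMR ↦ ?_⟩
  have hx : 1 ≤ lam * R := by
    have : nu ^ nu ≤ 1 := rpow_le_one hν0.le hν1.le hν0.le
    nlinarith [mul_pos hlam hR]
  set A := (lam * R) ^ (1 / nu) with hAdef
  have hA0 : 0 ≤ A := by positivity
  have hA : A ^ nu = lam * R := by rw [hAdef, one_div, rpow_inv_rpow (by linarith) hν0.ne']
  have hexp : (lam * nu ^ nu * R) ^ (1 / nu) = nu * A := by
    rw [mul_right_comm, mul_rpow (by positivity) (by positivity), one_div,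
      rpow_rpow_inv hν0.le hν0.ne', mul_comm, hAdef, one_div]
  have hC : (lam * nu ^ nu) ^ (-(1 / nu)) * R ^ (-(1 / nu)) ≤ 1 := by
    rw [← mul_rpow (by positivity) hR.le]
    exact (rpow_lt_one_of_one_lt_of_neg hMR (by simpa using hν0)).le
  have hlow := exp_mul_le_tsum_pow_div_factorial_rpow hν0 hν1 hA0
  have hup := (summable_and_tsum_pow_div_factorial_rpow_le hν0 hν1 hA0).2
  rw [hexp, ← hA]
  refine ⟨?_, hup.trans ?_⟩
  · rw [eval_one]
    linarith [mul_le_mul_of_nonneg_right hC (exp_pos (nu * A)).le]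
  have hpoly := rpow_one_div_add_one_le hν0 hx
  simp only [eval_mul, eval_C, eval_pow, eval_X]
  calc exp nu / nu * (A + 1) * exp (nu * A)
      ≤ exp nu / nu * (2 * (lam * R) ^ n) * exp (nu * A) := by gcongr
    _ = 2 * exp nu / nu * lam ^ n * R ^ n * exp (nu * A) := by ring
end

section
/- Let λ > 0, ν ∈ (0,1), μ > 0, and let (q_r)_{r≥1} be nonnegative reals with Σ_{r≥1} q_r = 1. Suppose exp(μ · Σ_{r≥1} q_r z^r) = Σ_{k≥0} (λz)^k/(k!)^ν for all complex z with |z| strictly less than the radius of convergence of Σ_{r≥1} q_r z^r. Let d be the unique integer with 1/ν ∈ (d−1, d]. Then q_r = 0 for all r > d; i.e., G(z) = Σ_{r≥1} q_r z^r is a polynomial of degree at most d. -/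
/-!
On `(-1, 1)` the function `g = log F` is the power series `μ G` with nonnegative coefficients, so
all its derivatives are nonnegative at `0`. Since `F > 0` on `[0, ∞)`, `g` is real-analytic there,
and nonnegativity of all derivatives propagates along `[0, ∞)`: at a point where every derivative
is nonnegative, the local Taylor series has nonnegative coefficients. Taylor's formula with
Lagrange remainder then gives `g x ≥ μ q_r x ^ r` for `x ≥ 0`. On the other hand
`(λx)^k/(k!)^ν ≤ exp(2ν(λx)^{1/ν}) 2^{-νk}`, so `g x = O(x^{1/ν})`, and `q_r > 0` forces
`r ≤ 1/ν ≤ d`.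
-/

open scoped ENNReal

open scoped Nat Topology
open Filter Set FormalMultilinearSeries Real

section DerivSeries

variable {𝕜 F : Type*} [NontriviallyNormedField 𝕜] [NormedAddCommGroup F] [NormedSpace 𝕜 F]

theorem FormalMultilinearSeries.coeff_apply_one_comp_derivSeries
    (p : FormalMultilinearSeries 𝕜 𝕜 F) (n : ℕ) :
    ((ContinuousLinearMap.apply 𝕜 F (1 : 𝕜)).compFormalMultilinearSeries p.derivSeries).coeff n
      = (n + 1) • p.coeff (n + 1) :=
  p.derivSeries_coeff_one n

variable [CompleteSpace F] {f : 𝕜 → F} {p : FormalMultilinearSeries 𝕜 𝕜 F} {x : 𝕜} {r : ℝ≥0∞}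

theorem HasFPowerSeriesOnBall.hasFPowerSeriesOnBall_deriv (h : HasFPowerSeriesOnBall f p x r) :
    HasFPowerSeriesOnBall (deriv f)
      ((ContinuousLinearMap.apply 𝕜 F (1 : 𝕜)).compFormalMultilinearSeries p.derivSeries) x r :=
  (ContinuousLinearMap.apply 𝕜 F (1 : 𝕜)).comp_hasFPowerSeriesOnBall h.fderiv

theorem HasFPowerSeriesOnBall.iteratedDeriv_eq_factorial_smul_coeff
    (h : HasFPowerSeriesOnBall f p x r) (n : ℕ) : iteratedDeriv n f x = n ! • p.coeff n := by
  rw [iteratedDeriv_eq_iteratedFDeriv, ← h.factorial_smul 1 n]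
  rfl

end DerivSeries

section AbsolutelyMonotone

variable {f g : ℝ → ℝ}

theorem HasFPowerSeriesOnBall.exists_iteratedDeriv_of_coeff_nonneg
    {p : FormalMultilinearSeries ℝ ℝ ℝ} {x : ℝ} {r : ℝ≥0∞} (h : HasFPowerSeriesOnBall f p x r)
    (hp : ∀ n, 0 ≤ p.coeff n) (n : ℕ) :
    ∃ q : FormalMultilinearSeries ℝ ℝ ℝ,
      HasFPowerSeriesOnBall (iteratedDeriv n f) q x r ∧ ∀ m, 0 ≤ q.coeff m := by
  induction n with
  | zero => exact ⟨p, by simpa using h, hp⟩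
  | succ n ih =>
    obtain ⟨q, hq, hq_nonneg⟩ := ih
    refine ⟨_, iteratedDeriv_succ (f := f) ▸ hq.hasFPowerSeriesOnBall_deriv, fun m => ?_⟩
    rw [coeff_apply_one_comp_derivSeries]
    exact nsmul_nonneg (hq_nonneg _) _

theorem HasFPowerSeriesOnBall.iteratedDeriv_nonneg
    {p : FormalMultilinearSeries ℝ ℝ ℝ} {x : ℝ} {r : ℝ≥0∞} (h : HasFPowerSeriesOnBall f p x r)
    (hp : ∀ n, 0 ≤ p.coeff n) (n : ℕ) {t : ℝ} (ht : 0 ≤ t) (htr : ‖t‖ₑ < r) :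
    0 ≤ iteratedDeriv n f (x + t) := by
  obtain ⟨q, hq, hq_nonneg⟩ := h.exists_iteratedDeriv_of_coeff_nonneg hp n
  refine (hq.hasSum (by simpa using htr)).nonneg fun m => ?_
  rw [apply_eq_pow_smul_coeff]
  exact smul_nonneg (pow_nonneg ht m) (hq_nonneg m)

theorem AnalyticAt.eventually_iteratedDeriv_nonneg {x : ℝ} (hg : AnalyticAt ℝ g x)
    (hx : ∀ n, 0 ≤ iteratedDeriv n g x) : ∀ᶠ y in 𝓝[≥] x, ∀ n, 0 ≤ iteratedDeriv n g y := by
  obtain ⟨r, hr⟩ := hg.hasFPowerSeriesAt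
  have hcoeff : ∀ n, 0 ≤ (ofScalars ℝ fun n => iteratedDeriv n g x / n !).coeff n := fun n => by
    rw [coeff_ofScalars]
    exact div_nonneg (hx n) (by positivity)
  filter_upwards [nhdsWithin_le_nhds (Metric.eball_mem_nhds x hr.r_pos), self_mem_nhdsWithin]
    with y hy (hxy : x ≤ y) n
  simpa using hr.iteratedDeriv_nonneg hcoeff n (sub_nonneg.2 hxy)
    (by simpa [edist_eq_enorm_sub] using hy)

theorem AnalyticOnNhd.iteratedDeriv_nonneg_of_le {a : ℝ} (hg : AnalyticOnNhd ℝ g (Ici a))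
    (ha : ∀ n, 0 ≤ iteratedDeriv n g a) {x : ℝ} (hax : a ≤ x) (n : ℕ) :
    0 ≤ iteratedDeriv n g x := by
  -- real induction: `s` is closed in `[a, x]` and, by the local step, open to the right
  set s := {y | ∀ n, 0 ≤ iteratedDeriv n g y}
  have hclosed : IsClosed (s ∩ Icc a x) := by
    have : s ∩ Icc a x = ⋂ n, Icc a x ∩ iteratedDeriv n g ⁻¹' Ici 0 := by
      ext y
      simp [s, and_comm, forall_and]
    rw [this]
    refine isClosed_iInter fun n => ContinuousOn.preimage_isClosed_of_isClosed ?_ isClosed_Icc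
      isClosed_Ici
    rw [iteratedDeriv_eq_iterate]
    exact (hg.iterated_deriv n).continuousOn.mono Icc_subset_Ici_self
  have hstep : ∀ y ∈ s ∩ Ico a x, s ∈ 𝓝[>] y := fun y hy =>
    nhdsWithin_mono _ Ioi_subset_Ici_self ((hg y hy.2.1).eventually_iteratedDeriv_nonneg hy.1)
  exact hclosed.Icc_subset_of_forall_mem_nhdsWithin ha hstep ⟨hax, le_rfl⟩ n

theorem AnalyticOnNhd.iteratedDeriv_mul_pow_div_factorial_le {a x : ℝ} (hax : a < x)
    (hg : AnalyticOnNhd ℝ g (Icc a x)) (hnonneg : ∀ k, ∀ y ∈ Icc a x, 0 ≤ iteratedDeriv k g y)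
    (n : ℕ) : iteratedDeriv n g a * (x - a) ^ n / n ! ≤ g x := by
  have hu : UniqueDiffOn ℝ (Icc a x) := uniqueDiffOn_Icc hax
  have ha : a ∈ Icc a x := left_mem_Icc.2 hax.le
  have hxa : 0 < x - a := sub_pos.2 hax
  obtain ⟨ξ, hξ, hrem⟩ := taylor_mean_remainder_lagrange_iteratedDeriv hax.ne
    (uIcc_of_le hax.le ▸ hg.contDiffOn hu)
  have hremainder : 0 ≤ g x - taylorWithinEval g n (uIcc a x) a x := by
    have := hnonneg (n + 1) ξ (Ioo_subset_Icc_self (uIoo_of_le hax.le ▸ hξ))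
    rw [hrem]
    positivity
  rw [taylor_within_apply, uIcc_of_le hax.le, Finset.sum_congr rfl fun k _ => by
    rw [iteratedDerivWithin_eq_iteratedDeriv hu (hg a ha).contDiffAt ha]] at hremainder
  calc iteratedDeriv n g a * (x - a) ^ n / n !
      = ((n ! : ℝ)⁻¹ * (x - a) ^ n) • iteratedDeriv n g a := by rw [smul_eq_mul]; ring
    _ ≤ ∑ k ∈ Finset.range (n + 1), ((k ! : ℝ)⁻¹ * (x - a) ^ k) • iteratedDeriv k g a :=
        Finset.single_le_sum (f := fun k => ((k ! : ℝ)⁻¹ * (x - a) ^ k) • iteratedDeriv k g a)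
          (fun k _ => by have := hnonneg k a ha; positivity) (Finset.self_mem_range_succ n)
    _ ≤ g x := sub_nonneg.1 hremainder

end AbsolutelyMonotone

section ComPoisson

variable {nu : ℝ}

theorem pow_div_factorial_rpow_le {z : ℝ} (hz : 0 ≤ z) (hnu : 0 < nu) (k : ℕ) :
    z ^ k / (k ! : ℝ) ^ nu ≤ exp (2 * nu * z ^ (1 / nu)) * ((2 : ℝ) ^ (-nu)) ^ k := by
  set y := z ^ (1 / nu)
  have hyz : (2 * y) ^ nu = 2 ^ nu * z := by
    rw [mul_rpow zero_le_two (by positivity), ← rpow_mul hz, one_div_mul_cancel hnu.ne', rpow_one]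
  -- pulling out `2 ^ (-νk)` leaves the `ν`-th power of a term of `exp (2y)`
  have hsplit : z ^ k / (k ! : ℝ) ^ nu = ((2 * y) ^ k / k !) ^ nu * ((2 : ℝ) ^ (-nu)) ^ k := by
    rw [div_rpow (by positivity) (by positivity), ← rpow_pow_comm (by positivity), hyz,
      rpow_neg zero_le_two, div_mul_eq_mul_div, ← mul_pow, mul_comm (2 ^ nu) z, mul_assoc,
      mul_inv_cancel₀ (by positivity), mul_one]
  rw [hsplit, show 2 * nu * y = 2 * y * nu by ring, exp_mul]
  gcongr
  exact Real.pow_div_factorial_le_exp _ (by positivity) k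

theorem summable_pow_div_factorial_rpow {z : ℝ} (hz : 0 ≤ z) (hnu : 0 < nu) :
    Summable fun k : ℕ => z ^ k / (k ! : ℝ) ^ nu :=
  .of_nonneg_of_le (fun k => by positivity) (pow_div_factorial_rpow_le hz hnu)
    ((summable_geometric_of_lt_one (by positivity)
      (rpow_lt_one_of_one_lt_of_neg one_lt_two (neg_lt_zero.2 hnu))).mul_left _)

theorem tsum_pow_div_factorial_rpow_le {z : ℝ} (hz : 0 ≤ z) (hnu : 0 < nu) :
    ∑' k : ℕ, z ^ k / (k ! : ℝ) ^ nu ≤ exp (2 * nu * z ^ (1 / nu)) * (1 - 2 ^ (-nu))⁻¹ := by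
  have hgeom : (2 : ℝ) ^ (-nu) < 1 := rpow_lt_one_of_one_lt_of_neg one_lt_two (neg_lt_zero.2 hnu)
  rw [← tsum_geometric_of_lt_one (by positivity) hgeom, ← tsum_mul_left]
  exact (summable_pow_div_factorial_rpow hz hnu).tsum_le_tsum (pow_div_factorial_rpow_le hz hnu)
    ((summable_geometric_of_lt_one (by positivity) hgeom).mul_left _)

theorem one_le_tsum_pow_div_factorial_rpow {z : ℝ} (hz : 0 ≤ z) (hnu : 0 < nu) :
    1 ≤ ∑' k : ℕ, z ^ k / (k ! : ℝ) ^ nu := by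
  simpa using (summable_pow_div_factorial_rpow hz hnu).le_tsum 0 fun k _ => by positivity

/-- The function `F` of the statement (the Conway–Maxwell–Poisson normalising constant)
on the real line. -/
noncomputable def comPoisson (lam nu x : ℝ) : ℝ :=
  ∑' k : ℕ, (lam * x) ^ k / (k ! : ℝ) ^ nu

theorem radius_ofScalars_comPoisson (lam : ℝ) (hnu : 0 < nu) :
    (ofScalars ℝ fun k => lam ^ k / (k ! : ℝ) ^ nu).radius = ⊤ := by
  refine radius_eq_top_of_summable_norm _ fun t => ?_
  simpa [ofScalars_norm, abs_div, abs_pow, mul_pow, div_mul_eq_mul_div,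
    abs_rpow_of_nonneg (Nat.cast_nonneg _)]
    using summable_pow_div_factorial_rpow (z := |lam| * t) (by positivity) hnu

theorem analyticAt_comPoisson (lam : ℝ) (hnu : 0 < nu) (x : ℝ) :
    AnalyticAt ℝ (comPoisson lam nu) x := by
  have hsum : comPoisson lam nu = (ofScalars ℝ fun k => lam ^ k / (k ! : ℝ) ^ nu).sum := by
    ext y
    simp only [comPoisson, FormalMultilinearSeries.sum, ofScalars_apply_eq, smul_eq_mul]
    exact tsum_congr fun k => by ring
  rw [hsum]
  exact (ofScalars ℝ fun k => lam ^ k / (k ! : ℝ) ^ nu).analyticOnNhd x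
    (by simp [radius_ofScalars_comPoisson lam hnu])

theorem analyticOnNhd_log_comPoisson {lam : ℝ} (hlam : 0 ≤ lam) (hnu : 0 < nu) :
    AnalyticOnNhd ℝ (fun x => log (comPoisson lam nu x)) (Ici 0) := fun x hx =>
  (analyticAt_comPoisson lam hnu x).log
    (zero_lt_one.trans_le (one_le_tsum_pow_div_factorial_rpow (mul_nonneg hlam hx) hnu))

theorem log_comPoisson_le {lam x : ℝ} (hlam : 0 ≤ lam) (hx : 0 ≤ x) (hnu : 0 < nu) :
    log (comPoisson lam nu x)
      ≤ -log (1 - 2 ^ (-nu)) + 2 * nu * lam ^ (1 / nu) * x ^ (1 / nu) := by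
  have hgeom : (2 : ℝ) ^ (-nu) < 1 := rpow_lt_one_of_one_lt_of_neg one_lt_two (neg_lt_zero.2 hnu)
  have hz : 0 ≤ lam * x := mul_nonneg hlam hx
  calc log (comPoisson lam nu x)
      ≤ log (exp (2 * nu * (lam * x) ^ (1 / nu)) * (1 - 2 ^ (-nu))⁻¹) :=
        log_le_log (zero_lt_one.trans_le (one_le_tsum_pow_div_factorial_rpow hz hnu))
          (tsum_pow_div_factorial_rpow_le hz hnu)
    _ = -log (1 - 2 ^ (-nu)) + 2 * nu * lam ^ (1 / nu) * x ^ (1 / nu) := by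
        rw [log_mul (exp_pos _).ne' (inv_pos.2 (sub_pos.2 hgeom)).ne', log_exp, log_inv,
          mul_rpow hlam hx]
        ring

end ComPoisson

theorem nonpos_of_eventually_mul_rpow_le {c A B r s : ℝ} (hr : 0 < r) (hsr : s < r)
    (h : ∀ᶠ x in atTop, c * x ^ r ≤ A + B * x ^ s) : c ≤ 0 := by
  have hlim : Tendsto (fun x : ℝ => A * x ^ (-r) + B * x ^ (-(r - s))) atTop (𝓝 0) := by
    simpa using ((tendsto_rpow_neg_atTop hr).const_mul A).add
      ((tendsto_rpow_neg_atTop (sub_pos.2 hsr)).const_mul B)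
  refine ge_of_tendsto hlim ?_
  filter_upwards [h, eventually_gt_atTop 0] with x hx hx0
  have hquot : A * x ^ (-r) + B * x ^ (-(r - s)) = (A + B * x ^ s) / x ^ r := by
    rw [neg_sub, rpow_neg hx0.le, rpow_sub hx0]
    field_simp
  rw [hquot, le_div_iff₀ (rpow_pos_of_pos hx0 r)]
  exact hx

theorem one_le_radiusOfConv {a : ℕ → ℂ} (ha : Summable a) : 1 ≤ radiusOfConv a :=
  le_iSup₂_of_le (1 : ℂ) (by simpa using ha) (by simp)

theorem hasFPowerSeriesOnBall_log_comPoisson {lam nu μ : ℝ} {q : ℕ → ℝ} (hq : Summable q)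
    (heq : ∀ z : ℂ, (‖z‖₊ : ℝ≥0∞) < radiusOfConv (fun r => (q r : ℂ)) →
      Complex.exp ((μ : ℂ) * ∑' r : ℕ, (q r : ℂ) * z ^ r)
        = ∑' k : ℕ, ((lam : ℂ) * z) ^ k / (((k.factorial : ℝ) ^ nu : ℝ) : ℂ)) :
    HasFPowerSeriesOnBall (fun x => log (comPoisson lam nu x))
      (ofScalars ℝ fun r => μ * q r) 0 1 := by
  have hrad : 1 ≤ (ofScalars ℝ fun r => μ * q r).radius := by
    simpa using (ofScalars ℝ fun r => μ * q r).le_radius_of_summable_norm (r := 1)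
      (by simpa [ofScalars_norm] using (hq.mul_left μ).abs)
  have hsum := ((ofScalars ℝ fun r => μ * q r).hasFPowerSeriesOnBall
    (zero_lt_one.trans_le hrad)).mono zero_lt_one hrad
  refine hsum.congr fun x hx => ?_
  have hx' : (‖(x : ℂ)‖₊ : ℝ≥0∞) < radiusOfConv (fun r => (q r : ℂ)) := by
    refine lt_of_lt_of_le ?_ (one_le_radiusOfConv (Complex.summable_ofReal.2 hq))
    simpa [edist_dist, ← NNReal.coe_lt_one] using hx
  have hexp : exp (μ * ∑' r, q r * x ^ r) = comPoisson lam nu x := by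
    have := heq x hx'
    push_cast [comPoisson, Complex.ofReal_tsum] at this ⊢
    exact_mod_cast this
  simp only [FormalMultilinearSeries.sum, ofScalars_apply_eq, smul_eq_mul, ← hexp, log_exp,
    ← tsum_mul_left]
  exact tsum_congr fun r => by ring

theorem generating_function_is_polynomial_general (lam nu μ : ℝ)
    (hlam : 0 < lam) (hnu : nu ∈ Set.Ioo (0 : ℝ) 1) (hμ : 0 < μ)
    (q : ℕ → ℝ) (hq : ∀ r, 0 ≤ q r) (hqsum : ∑' r, q r = 1)
    (heq : ∀ z : ℂ, (‖z‖₊ : ℝ≥0∞) < radiusOfConv (fun r => (q r : ℂ)) →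
      Complex.exp ((μ : ℂ) * ∑' r : ℕ, (q r : ℂ) * z ^ r)
        = ∑' k : ℕ, ((lam : ℂ) * z) ^ k / (((k.factorial : ℝ) ^ nu : ℝ) : ℂ))
    (d : ℤ) (hd2 : 1 / nu ≤ (d : ℝ)) :
    ∀ r : ℕ, (d : ℝ) < (r : ℝ) → q r = 0 := by
  intro r hdr
  have hq_summable : Summable q := by
    by_contra h
    simp [tsum_eq_zero_of_not_summable h] at hqsum
  set g : ℝ → ℝ := fun x => log (comPoisson lam nu x)
  have hg_analytic : AnalyticOnNhd ℝ g (Ici 0) := analyticOnNhd_log_comPoisson hlam.le hnu.1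
  have hg_series := hasFPowerSeriesOnBall_log_comPoisson hq_summable heq
  have hg_deriv_zero : ∀ n, iteratedDeriv n g 0 = n ! * (μ * q n) := fun n => by
    simpa using hg_series.iteratedDeriv_eq_factorial_smul_coeff n
  have hg_deriv_nonneg : ∀ n x, 0 ≤ x → 0 ≤ iteratedDeriv n g x := fun n x hx =>
    hg_analytic.iteratedDeriv_nonneg_of_le
      (fun n => by rw [hg_deriv_zero]; have := hq n; positivity) hx n
  have hr : 1 / nu < r := hd2.trans_lt hdr
  have hgrowth : μ * q r ≤ 0 := by
    refine nonpos_of_eventually_mul_rpow_le ((one_div_pos.2 hnu.1).trans hr) hr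
      (A := -log (1 - 2 ^ (-nu))) (B := 2 * nu * lam ^ (1 / nu)) ?_
    filter_upwards [eventually_gt_atTop 0] with x hx
    calc μ * q r * x ^ (r : ℝ) = iteratedDeriv r g 0 * (x - 0) ^ r / r ! := by
          rw [hg_deriv_zero, rpow_natCast, sub_zero]
          field_simp
      _ ≤ g x := (hg_analytic.mono Icc_subset_Ici_self).iteratedDeriv_mul_pow_div_factorial_le hx
          (fun k y hy => hg_deriv_nonneg k y hy.1) r
      _ ≤ _ := log_comPoisson_le hlam.le hx.le hnu.1
  exact le_antisymm (le_of_mul_le_mul_left (by simpa using hgrowth) hμ) (hq r)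

/-- Let `λ > 0`, `ν ∈ (0,1)`, `μ > 0`, and `(q_r)_{r ≥ 1}` nonnegative reals summing
to `1`, with `exp(μ · Σ_{r≥1} q_r z^r) = Σ_{k≥0} (λz)^k/(k!)^ν` for all complex `z`
with `|z|` less than the radius of convergence of `Σ_{r≥1} q_r z^r`.  If `d` is the
unique integer with `1/ν ∈ (d−1, d]`, then `q_r = 0` for all `r > d`: the generating
function `G(z) = Σ_{r≥1} q_r z^r` is a polynomial of degree at most `d`. -/
theorem generating_function_is_polynomial (lam nu μ : ℝ)
    (hlam : 0 < lam) (hnu : nu ∈ Set.Ioo (0 : ℝ) 1) (hμ : 0 < μ)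
    (q : ℕ → ℝ) (hq0 : q 0 = 0) (hq : ∀ r, 0 ≤ q r) (hqsum : ∑' r, q r = 1)
    (heq : ∀ z : ℂ, (‖z‖₊ : ℝ≥0∞) < radiusOfConv (fun r => (q r : ℂ)) →
      Complex.exp ((μ : ℂ) * ∑' r : ℕ, (q r : ℂ) * z ^ r)
        = ∑' k : ℕ, ((lam : ℂ) * z) ^ k / (((k.factorial : ℝ) ^ nu : ℝ) : ℂ))
    (d : ℤ) (hd1 : (d : ℝ) - 1 < 1 / nu) (hd2 : 1 / nu ≤ (d : ℝ)) :
    ∀ r : ℕ, (d : ℝ) < (r : ℝ) → q r = 0 :=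
  generating_function_is_polynomial_general lam nu μ hlam hnu hμ q hq hqsum heq d hd2
end

section
/- Let λ > 0, ν ∈ (0,1), μ > 0, and let G(z) = Σ_{r≥1} q_r z^r be an entire function with nonnegative coefficients q_r such that exp(μ G(z)) = Σ_{k≥0} (λz)^k/(k!)^ν for all z ∈ ℂ. Let d be the unique integer with 1/ν ∈ (d−1, d]. Then there exist constants C > 0 and R₀ > 0 such that |G(z)| ≤ C·|z|^d for all z with |z| ≥ R₀. -/
private lemma rpow_split_aux {nu : ℝ} (hnu0 : 0 < nu) (hnu1 : nu < 1) (c s : ℝ)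
    (hc : 0 ≤ c) (hs : 0 < s) : c ^ nu ≤ c * s ^ (nu - 1) + s ^ nu := by
  rcases le_total c s with h | h
  · have h1 : c ^ nu ≤ s ^ nu := Real.rpow_le_rpow hc h hnu0.le
    have h2 : 0 ≤ c * s ^ (nu - 1) := mul_nonneg hc (Real.rpow_nonneg hs.le _)
    linarith
  · have hc0 : 0 < c := lt_of_lt_of_le hs h
    have h1 : c ^ (nu - 1) ≤ s ^ (nu - 1) :=
      Real.rpow_le_rpow_of_nonpos hs h (by linarith)
    have h2 : c ^ nu = c * c ^ (nu - 1) := by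
      have h3 := Real.rpow_add hc0 1 (nu - 1)
      rw [Real.rpow_one] at h3
      rw [← h3]; congr 1; ring
    have h4 : 0 ≤ s ^ nu := Real.rpow_nonneg hs.le _
    nlinarith [mul_le_mul_of_nonneg_left h1 hc0.le]

/-- Let `λ > 0`, `ν ∈ (0,1)`, `μ > 0`, and let `G(z) = Σ_{r≥1} q_r z^r` be an entire
function with nonnegative coefficients such that
`exp(μ G(z)) = Σ_{k≥0} (λz)^k/(k!)^ν` for all `z ∈ ℂ`.  If `d` is the unique integer
with `1/ν ∈ (d−1, d]`, then there are `C > 0` and `R₀ > 0` with `|G(z)| ≤ C·|z|^d`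
for all `|z| ≥ R₀`. -/
theorem generating_function_poly_growth (lam nu μ : ℝ)
    (hlam : 0 < lam) (hnu : nu ∈ Set.Ioo (0 : ℝ) 1) (hμ : 0 < μ)
    (q : ℕ → ℝ) (hq0 : q 0 = 0) (hq : ∀ r, 0 ≤ q r)
    (G : ℂ → ℂ) (hG : ∀ z : ℂ, HasSum (fun r : ℕ => (q r : ℂ) * z ^ r) (G z))
    (heq : ∀ z : ℂ, Complex.exp ((μ : ℂ) * G z)
      = ∑' k : ℕ, ((lam : ℂ) * z) ^ k / (((k.factorial : ℝ) ^ nu : ℝ) : ℂ))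
    (d : ℤ) (hd1 : (d : ℝ) - 1 < 1 / nu) (hd2 : 1 / nu ≤ (d : ℝ)) :
    ∃ C : ℝ, 0 < C ∧ ∃ R₀ : ℝ, 0 < R₀ ∧
      ∀ z : ℂ, R₀ ≤ ‖z‖ → ‖G z‖ ≤ C * ‖z‖ ^ (d : ℝ) := by
  obtain ⟨hnu0, hnu1⟩ := hnu
  have hd0 : (0 : ℝ) ≤ (d : ℝ) := le_trans (le_of_lt (by positivity)) hd2
  set t : ℝ := (2 : ℝ) ^ ((1 - nu) / nu) with htdef
  have ht0 : 0 < t := Real.rpow_pos_of_pos two_pos _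
  -- cast the terms of hG on the real axis
  have hcast : ∀ x : ℝ, ∀ r : ℕ, (q r : ℂ) * (x : ℂ) ^ r = ((q r * x ^ r : ℝ) : ℂ) := by
    intro x r; push_cast; ring
  -- real sums for G on the real axis
  have hGreal : ∀ x : ℝ, HasSum (fun r : ℕ => q r * x ^ r) ((G x).re) := by
    intro x
    have h := Complex.hasSum_re (hG (x : ℂ))
    simp only [hcast x, Complex.ofReal_re] at h
    exact h
  have hGx : ∀ x : ℝ, G (x : ℂ) = (((G (x : ℂ)).re : ℝ) : ℂ) := by
    intro x
    have h1 : HasSum (fun r : ℕ => (q r : ℂ) * (x : ℂ) ^ r) (((G (x : ℂ)).re : ℝ) : ℂ) := by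
      have h := Complex.hasSum_ofReal.mpr (hGreal x)
      simp only [← hcast x] at h
      exact h
    exact (hG (x : ℂ)).unique h1
  -- the modulus bound ‖G z‖ ≤ (G |z|).re
  have hnormG : ∀ z : ℂ, ‖G z‖ ≤ (G ((‖z‖ : ℝ) : ℂ)).re := by
    intro z
    have hnorm_eq : (fun r : ℕ => ‖(q r : ℂ) * z ^ r‖) = fun r : ℕ => q r * ‖z‖ ^ r := by
      funext r
      simp [norm_mul, norm_pow, Complex.norm_real, Real.norm_eq_abs, abs_of_nonneg (hq r)]
    have hsum : Summable (fun r : ℕ => ‖(q r : ℂ) * z ^ r‖) := by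
      rw [hnorm_eq]; exact (hGreal ‖z‖).summable
    calc ‖G z‖ = ‖∑' r : ℕ, (q r : ℂ) * z ^ r‖ := by rw [(hG z).tsum_eq]
      _ ≤ ∑' r : ℕ, ‖(q r : ℂ) * z ^ r‖ := norm_tsum_le_tsum_norm hsum
      _ = ∑' r : ℕ, q r * ‖z‖ ^ r := by rw [hnorm_eq]
      _ = (G ((‖z‖ : ℝ) : ℂ)).re := (hGreal ‖z‖).tsum_eq
  -- the key term-by-term bound
  have hterm : ∀ x : ℝ, 1 ≤ x → ∀ k : ℕ,
      (lam * x) ^ k / ((k.factorial : ℝ) ^ nu)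
        ≤ ((lam * x) ^ (1 / nu) * t) ^ k / (k.factorial : ℝ) + (1 / 2 : ℝ) ^ k := by
    intro x hx k
    have hx0 : 0 < x := lt_of_lt_of_le one_pos hx
    have ha : 0 < lam * x := mul_pos hlam hx0
    set a : ℝ := lam * x with hadef
    set b : ℝ := a ^ (1 / nu) with hbdef
    have hb0 : 0 < b := Real.rpow_pos_of_pos ha _
    set u : ℝ := ((1 : ℝ) / 2) ^ (1 / nu) with hudef
    have hu0 : 0 < u := Real.rpow_pos_of_pos one_half_pos _
    have hfact : (0 : ℝ) < (k.factorial : ℝ) := by exact_mod_cast k.factorial_pos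
    have key := rpow_split_aux hnu0 hnu1 (b ^ k / (k.factorial : ℝ)) (u ^ k)
      (div_nonneg (pow_nonneg hb0.le _) hfact.le) (pow_pos hu0 _)
    have e1 : (b ^ k / (k.factorial : ℝ)) ^ nu = a ^ k / ((k.factorial : ℝ) ^ nu) := by
      rw [Real.div_rpow (pow_nonneg hb0.le _) hfact.le]
      congr 1
      rw [← Real.rpow_natCast b k, ← Real.rpow_mul hb0.le, hbdef,
        ← Real.rpow_mul ha.le, show (1 / nu) * ((k : ℝ) * nu) = (k : ℝ) by field_simp,
        Real.rpow_natCast]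
    have e2 : (u ^ k) ^ nu = (1 / 2 : ℝ) ^ k := by
      rw [← Real.rpow_natCast u k, ← Real.rpow_mul hu0.le, hudef,
        ← Real.rpow_mul one_half_pos.le,
        show (1 / nu) * ((k : ℝ) * nu) = (k : ℝ) by field_simp,
        Real.rpow_natCast]
    have e3 : (u ^ k) ^ (nu - 1) = t ^ k := by
      rw [← Real.rpow_natCast u k, ← Real.rpow_mul hu0.le, hudef,
        ← Real.rpow_mul one_half_pos.le, htdef, ← Real.rpow_natCast ((2:ℝ) ^ ((1-nu)/nu)) k,
        ← Real.rpow_mul two_pos.le]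
      rw [show (1 : ℝ) / 2 = 2⁻¹ by norm_num, Real.inv_rpow two_pos.le,
        ← Real.rpow_neg two_pos.le]
      congr 1
      field_simp
      ring
    rw [e1, e2, e3] at key
    calc a ^ k / ((k.factorial : ℝ) ^ nu)
        ≤ b ^ k / (k.factorial : ℝ) * t ^ k + (1 / 2 : ℝ) ^ k := key
      _ = (b * t) ^ k / (k.factorial : ℝ) + (1 / 2 : ℝ) ^ k := by
          rw [mul_pow]; ring
  -- summability of the real series
  have hrhs_summable : ∀ B : ℝ, Summable (fun k : ℕ =>
      B ^ k / (k.factorial : ℝ) + (1 / 2 : ℝ) ^ k) :=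
    fun B => (Real.summable_pow_div_factorial B).add
      (summable_geometric_of_lt_one (by norm_num) (by norm_num))
  have hf_summable : ∀ x : ℝ, 1 ≤ x →
      Summable (fun k : ℕ => (lam * x) ^ k / ((k.factorial : ℝ) ^ nu)) := by
    intro x hx
    have hx0 : 0 < x := lt_of_lt_of_le one_pos hx
    have ha : 0 ≤ lam * x := (mul_pos hlam hx0).le
    refine Summable.of_nonneg_of_le (fun k => ?_) (hterm x hx) (hrhs_summable _)
    exact div_nonneg (pow_nonneg ha _) (Real.rpow_nonneg (Nat.cast_nonneg _) _)
  -- value of the rhs tsum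
  have hrhs_tsum : ∀ B : ℝ, (∑' k : ℕ, (B ^ k / (k.factorial : ℝ) + (1 / 2 : ℝ) ^ k))
      = Real.exp B + 2 := by
    intro B
    rw [Summable.tsum_add (Real.summable_pow_div_factorial B)
      (summable_geometric_of_lt_one (by norm_num) (by norm_num))]
    congr 1
    · rw [Real.exp_eq_exp_ℝ, NormedSpace.exp_eq_tsum_div]
    · rw [tsum_geometric_of_lt_one (by norm_num) (by norm_num)]; norm_num
  -- the main real estimate
  have hmain : ∀ x : ℝ, 1 ≤ x →
      μ * (G (x : ℂ)).re ≤ (Real.log 3 + t * lam ^ (1 / nu)) * x ^ (d : ℝ) := by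
    intro x hx
    have hx0 : 0 < x := lt_of_lt_of_le one_pos hx
    have ha : 0 < lam * x := mul_pos hlam hx0
    set B : ℝ := (lam * x) ^ (1 / nu) * t with hBdef
    have hB0 : 0 ≤ B := mul_nonneg (Real.rpow_nonneg ha.le _) ht0.le
    -- identify the real exponential
    have hexp_eq : Real.exp (μ * (G (x : ℂ)).re)
        = ∑' k : ℕ, (lam * x) ^ k / ((k.factorial : ℝ) ^ nu) := by
      have h1 := heq (x : ℂ)
      rw [hGx x] at h1
      have h2 : Complex.exp ((μ : ℂ) * (((G (x : ℂ)).re : ℝ) : ℂ))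
          = ((Real.exp (μ * (G (x : ℂ)).re) : ℝ) : ℂ) := by
        rw [← Complex.ofReal_mul, Complex.ofReal_exp]
      have h3 : (∑' k : ℕ, ((lam : ℂ) * (x : ℂ)) ^ k / (((k.factorial : ℝ) ^ nu : ℝ) : ℂ))
          = (((∑' k : ℕ, (lam * x) ^ k / ((k.factorial : ℝ) ^ nu) : ℝ)) : ℂ) := by
        have h4 := Complex.hasSum_ofReal.mpr (hf_summable x hx).hasSum
        have h5 : HasSum (fun k : ℕ => ((lam : ℂ) * (x : ℂ)) ^ k
            / (((k.factorial : ℝ) ^ nu : ℝ) : ℂ))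
            (((∑' k : ℕ, (lam * x) ^ k / ((k.factorial : ℝ) ^ nu) : ℝ)) : ℂ) := by
          convert h4 using 2 with k
          push_cast
          ring
        exact h5.tsum_eq
      rw [h2, h3] at h1
      exact_mod_cast h1
    -- bound the sum
    have hsum_le : (∑' k : ℕ, (lam * x) ^ k / ((k.factorial : ℝ) ^ nu)) ≤ Real.exp B + 2 := by
      rw [← hrhs_tsum B]
      exact Summable.tsum_le_tsum (hterm x hx) (hf_summable x hx) (hrhs_summable B)
    have h1exp : (1 : ℝ) ≤ Real.exp B := Real.one_le_exp hB0
    have hsum_le' : (∑' k : ℕ, (lam * x) ^ k / ((k.factorial : ℝ) ^ nu))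
        ≤ Real.exp (Real.log 3 + B) := by
      rw [Real.exp_add, Real.exp_log (by norm_num : (0:ℝ) < 3)]
      linarith
    have hle : μ * (G (x : ℂ)).re ≤ Real.log 3 + B := by
      have := hexp_eq ▸ hsum_le'
      exact Real.exp_le_exp.mp this
    -- bound B by the polynomial
    have hxd1 : (1 : ℝ) ≤ x ^ (d : ℝ) := Real.one_le_rpow hx hd0
    have hBle : B ≤ t * lam ^ (1 / nu) * x ^ (d : ℝ) := by
      have h1 : (lam * x) ^ (1 / nu) = lam ^ (1 / nu) * x ^ (1 / nu) :=
        Real.mul_rpow hlam.le hx0.le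
      have h2 : x ^ (1 / nu) ≤ x ^ (d : ℝ) :=
        Real.rpow_le_rpow_of_exponent_le hx hd2
      have h3 : 0 < lam ^ (1 / nu) := Real.rpow_pos_of_pos hlam _
      rw [hBdef, h1]
      calc lam ^ (1 / nu) * x ^ (1 / nu) * t
          ≤ lam ^ (1 / nu) * x ^ (d : ℝ) * t := by
            have := mul_le_mul_of_nonneg_left h2 h3.le
            nlinarith
        _ = t * lam ^ (1 / nu) * x ^ (d : ℝ) := by ring
    have hlog3 : 0 < Real.log 3 := Real.log_pos (by norm_num)
    have h3 : 0 < lam ^ (1 / nu) := Real.rpow_pos_of_pos hlam _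
    nlinarith [mul_le_mul_of_nonneg_left hxd1 hlog3.le]
  -- conclusion
  have hK : 0 < Real.log 3 + t * lam ^ (1 / nu) := by
    have hlog3 : 0 < Real.log 3 := Real.log_pos (by norm_num)
    have h3 : 0 < lam ^ (1 / nu) := Real.rpow_pos_of_pos hlam _
    nlinarith
  refine ⟨(Real.log 3 + t * lam ^ (1 / nu)) / μ, div_pos hK hμ, 1, one_pos, ?_⟩
  intro z hz
  have h1 := hnormG z
  have h2 := hmain ‖z‖ hz
  have h3 : (G ((‖z‖ : ℝ) : ℂ)).re
      ≤ (Real.log 3 + t * lam ^ (1 / nu)) / μ * ‖z‖ ^ (d : ℝ) := by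
    rw [div_mul_eq_mul_div, le_div_iff₀ hμ]
    nlinarith
  linarith
end

section
/- Let ν ∈ (0,1) and set p = 1/ν. For every real x > 1, Σ_{k : kν ≥ 2} x^k / Γ(kν) ≤ (⌊p⌋ + 1) · x^{2p} · e^{x^p}, where the sum is over all integers k with kν ≥ 2. -/
/-!
Put `p = 1/ν`, `t = kν` and `m = ⌊t⌋ ≥ 2`. As `Γ` is increasing on `[2, ∞)`,
`Γ(t) ≥ Γ(m) = (m-1)!`, while `x^k = x^(tp) ≤ x^((m+1)p) = x^(2p) (x^p)^(m-1)`. The integers `k`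
with `⌊kν⌋ = m` lie in the interval `[mp, (m+1)p)` of length `p`, so there are at most `⌊p⌋ + 1`
of them; summing `x^(2p) y^(m-1) / (m-1)!` with `y = x^p` over `m` gives at most `x^(2p) e^y`.
-/

open Finset Real Nat

theorem sum_pow_div_factorial_le_exp {x : ℝ} (hx : 0 ≤ x) (s : Finset ℕ) :
    ∑ n ∈ s, x ^ n / n ! ≤ exp x := by
  rw [exp_eq_exp_ℝ]
  exact sum_le_hasSum s (fun n _ => by positivity) (NormedSpace.expSeries_div_hasSum_exp x)

theorem factorial_le_Gamma {n : ℕ} {t : ℝ} (hn : 1 ≤ n) (ht : n + 1 ≤ t) :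
    (n ! : ℝ) ≤ Gamma t := by
  have h2 : (2 : ℝ) ≤ n + 1 := by norm_cast; omega
  rw [← Gamma_nat_eq_factorial]
  exact Gamma_strictMonoOn_Ici.monotoneOn h2 (h2.trans ht) ht

theorem rpow_mul_le_rpow_two_mul_mul_pow {x p t : ℝ} {n : ℕ} (hx : 1 ≤ x) (hp : 0 ≤ p)
    (ht : t ≤ n + 2) : x ^ (t * p) ≤ x ^ (2 * p) * (x ^ p) ^ n := by
  have hx0 : 0 < x := one_pos.trans_le hx
  rw [← rpow_natCast, ← rpow_mul hx0.le, ← rpow_add hx0]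
  exact rpow_le_rpow_of_exponent_le hx (by nlinarith)

theorem rpow_mul_div_Gamma_le {x p t : ℝ} (hx : 1 ≤ x) (hp : 0 ≤ p) (ht : 2 ≤ t) :
    x ^ (t * p) / Gamma t ≤ x ^ (2 * p) * ((x ^ p) ^ (⌊t⌋₊ - 1) / (⌊t⌋₊ - 1)!) := by
  have hfloor : 2 ≤ ⌊t⌋₊ := le_floor ht
  set n := ⌊t⌋₊ - 1
  have hn : (n : ℝ) + 1 = ⌊t⌋₊ := by norm_cast; omega
  have hx0 : 0 < x := one_pos.trans_le hx
  rw [← mul_div_assoc]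
  exact div_le_div₀ (by positivity)
    (rpow_mul_le_rpow_two_mul_mul_pow hx hp (by linarith [lt_floor_add_one t]))
    (by positivity) (factorial_le_Gamma (by omega) (hn ▸ floor_le (by linarith)))

theorem card_le_floor_one_div_add_one {ν a : ℝ} (hν : 0 < ν) {T : Finset ℕ}
    (hT : ∀ k ∈ T, a ≤ k * ν ∧ k * ν < a + 1) : #T ≤ ⌊1 / ν⌋₊ + 1 := by
  set c := ⌈a / ν⌉₊
  suffices T ⊆ Icc c (c + ⌊1 / ν⌋₊) by simpa [Nat.card_Icc, add_assoc] using card_le_card this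
  intro k hk
  obtain ⟨hlo, hhi⟩ := hT k hk
  have hck : c ≤ k := ceil_le.mpr ((div_le_iff₀ hν).mpr hlo)
  have hk : (k : ℝ) < c + 1 / ν := by
    have := le_ceil (a / ν)
    have : (k : ℝ) < a / ν + 1 / ν := by
      rw [← add_div, lt_div_iff₀ hν]; exact hhi
    linarith
  have : k - c ≤ ⌊1 / ν⌋₊ := le_floor (by push_cast [hck]; linarith)
  simp only [mem_Icc]; omega

theorem sum_comp_le_nsmul_sum_image {ι κ M : Type*} [DecidableEq κ] [AddCommMonoid M]
    [PartialOrder M] [IsOrderedAddMonoid M] {s : Finset ι} {g : ι → κ} {f : κ → M} {N : ℕ}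
    (hf : ∀ j, 0 ≤ f j) (hN : ∀ j, #{i ∈ s | g i = j} ≤ N) :
    ∑ i ∈ s, f (g i) ≤ N • ∑ j ∈ s.image g, f j := by
  rw [sum_comp, smul_sum]
  exact sum_le_sum fun j _ => nsmul_le_nsmul_left (hf j) (hN j)

/-- Let `ν ∈ (0,1)`, `p = 1/ν`.  For every real `x > 1`,
`Σ_{k : kν ≥ 2} x^k / Γ(kν) ≤ (⌊p⌋ + 1) · x^(2p) · e^(x^p)`, the sum being over all
nonnegative integers `k` with `kν ≥ 2`. -/
theorem tail_sum_upper_bound (nu : ℝ) (hnu : nu ∈ Set.Ioo (0 : ℝ) 1)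
    (x : ℝ) (hx : 1 < x) :
    ∑' k : {k : ℕ // 2 ≤ (k : ℝ) * nu}, x ^ (k : ℕ) / Real.Gamma (((k : ℕ) : ℝ) * nu)
      ≤ ((⌊1 / nu⌋ : ℝ) + 1) * x ^ (2 * (1 / nu)) * Real.exp (x ^ (1 / nu)) := by
  obtain ⟨hnu0, -⟩ := hnu
  set p := 1 / nu
  have hp : 0 < p := by positivity
  set B : ℕ → ℝ := fun n => x ^ (2 * p) * ((x ^ p) ^ n / n !)
  set g : {k : ℕ // 2 ≤ (k : ℝ) * nu} → ℕ := fun k => ⌊(k : ℝ) * nu⌋₊ - 1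
  have hterm (k : {k : ℕ // 2 ≤ (k : ℝ) * nu}) :
      x ^ (k : ℕ) / Gamma ((k : ℕ) * nu) ≤ B (g k) := by
    have hk : x ^ (k : ℕ) = x ^ ((k : ℕ) * nu * p) := by
      rw [mul_assoc, mul_one_div_cancel hnu0.ne', mul_one, rpow_natCast]
    rw [hk]
    exact rpow_mul_div_Gamma_le hx.le hp.le k.2
  have hfiber (S : Finset {k : ℕ // 2 ≤ (k : ℝ) * nu}) (n : ℕ) :
      #{k ∈ S | g k = n} ≤ ⌊p⌋₊ + 1 := by
    rw [← card_map (Function.Embedding.subtype _)]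
    refine card_le_floor_one_div_add_one (a := (n + 1 : ℕ)) hnu0 fun _ hk => ?_
    simp only [mem_map, mem_filter, Function.Embedding.subtype_apply] at hk
    obtain ⟨k, ⟨-, hgk⟩, rfl⟩ := hk
    have h2 : 2 ≤ ⌊(k : ℝ) * nu⌋₊ := le_floor k.2
    exact (floor_eq_iff (by positivity)).1 (by simp only [g] at hgk; omega)
  rw [← natCast_floor_eq_intCast_floor hp.le]
  refine tsum_le_of_sum_le' (by positivity) fun S => ?_
  calc ∑ k ∈ S, x ^ (k : ℕ) / Gamma ((k : ℕ) * nu)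
      ≤ ∑ k ∈ S, B (g k) := sum_le_sum fun k _ => hterm k
    _ ≤ (⌊p⌋₊ + 1) • ∑ n ∈ S.image g, B n :=
        sum_comp_le_nsmul_sum_image (fun n => by positivity) (hfiber S)
    _ ≤ _ := by
        rw [nsmul_eq_mul, ← mul_sum, mul_assoc]
        push_cast
        gcongr
        exact sum_pow_div_factorial_le_exp (by positivity) _
end

section
/- Let ν ∈ (0,1) and set p = 1/ν. For every real x > 1, Σ_{k≥0} x^k / Γ(kν + 1) ≥ x^{−p} · (e^{x^p} − 1). -/
/-!
Put `y = x ^ p`, so that `x ^ (-p) * (exp y - 1) = ∑ y ^ m / (m + 1)!`. Since `p > 1`, the map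
`m ↦ ⌈p m⌉` is injective, and it dominates this series termwise: `x ^ ⌈p m⌉ ≥ y ^ m` as `x > 1`,
while `⌈p m⌉ ν ∈ [m, m + 1]`, so convexity of `Γ` on `[m + 1, m + 2]` gives
`Γ(⌈p m⌉ ν + 1) ≤ (m + 1)!`. The series on the right converges because
`Γ(t + 1) ≥ ⌊t⌋! ≥ R ^ (t - 1) / exp R` for `R, t ≥ 1`.
-/

open Filter Real
open scoped Nat

namespace Real

lemma rpow_sub_one_le_exp_mul_Gamma_add_one {R t : ℝ} (hR : 1 ≤ R) (ht : 1 ≤ t) :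
    R ^ (t - 1) ≤ exp R * Gamma (t + 1) := by
  have ht0 : 0 ≤ t := by linarith
  set m := ⌊t⌋₊
  have hm : (1 : ℝ) ≤ m := by exact_mod_cast Nat.one_le_floor_iff _ |>.2 ht
  have hGamma : (m ! : ℝ) ≤ Gamma (t + 1) := by
    rw [← Gamma_nat_eq_factorial]
    exact Gamma_strictMonoOn_Ici.monotoneOn (by simp; linarith) (by simp; linarith)
      (by linarith [Nat.floor_le ht0])
  calc R ^ (t - 1) ≤ R ^ (m : ℝ) := rpow_le_rpow_of_exponent_le hR (Nat.sub_one_lt_floor t).le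
    _ = R ^ m / m ! * m ! := by rw [rpow_natCast, div_mul_cancel₀ _ (by positivity)]
    _ ≤ exp R * Gamma (t + 1) := by
      gcongr
      exact pow_div_factorial_le_exp R (by linarith) m

lemma summable_pow_div_Gamma_mul_add_one {α : ℝ} (hα : 0 < α) (z : ℝ) :
    Summable fun k : ℕ => z ^ k / Gamma (k * α + 1) := by
  set w := 2 * |z| + 1
  have hw : 1 ≤ w := le_add_of_nonneg_left (by positivity)
  set R := w ^ α⁻¹
  have hR : 1 ≤ R := one_le_rpow hw (by positivity)
  refine ((summable_geometric_two).mul_left (R * exp R)).of_norm_bounded_eventually_nat ?_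
  filter_upwards [eventually_ge_atTop ⌈α⁻¹⌉₊] with k hk
  have hkα : 1 ≤ k * α := by
    rw [← div_le_iff₀ hα, one_div]; exact Nat.ceil_le.1 hk
  have hRk : R ^ (k * α - 1) = w ^ k / R := by
    rw [rpow_sub (by positivity), rpow_one, ← rpow_mul (by positivity),
      mul_comm (k : ℝ), inv_mul_cancel_left₀ hα.ne', rpow_natCast]
  have hGpos : 0 < Gamma (k * α + 1) := Gamma_pos_of_pos (by positivity)
  have hG : w ^ k / Gamma (k * α + 1) ≤ R * exp R := by
    have := rpow_sub_one_le_exp_mul_Gamma_add_one hR hkα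
    rw [hRk, div_le_iff₀ (by positivity)] at this
    rw [div_le_iff₀ hGpos]
    linarith
  calc ‖z ^ k / Gamma (k * α + 1)‖ = |z| ^ k / Gamma (k * α + 1) := by
        rw [norm_div, norm_pow, norm_eq_abs, norm_eq_abs, abs_of_pos hGpos]
    _ ≤ (w / 2) ^ k / Gamma (k * α + 1) := by
        gcongr
        linarith
    _ = w ^ k / Gamma (k * α + 1) * (1 / 2) ^ k := by rw [div_pow, one_div_pow]; ring
    _ ≤ R * exp R * (1 / 2) ^ k := by gcongr

lemma Gamma_add_one_le_factorial_succ {m : ℕ} {s : ℝ} (hm : m ≤ s) (hs : s ≤ m + 1) :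
    Gamma (s + 1) ≤ (m + 1)! := by
  have hseg : s + 1 ∈ segment ℝ ((m : ℝ) + 1) ((m + 1 : ℕ) + 1) := by
    rw [segment_eq_Icc (by push_cast; linarith)]
    constructor <;> push_cast <;> linarith
  refine (convexOn_Gamma.le_on_segment (Set.mem_Ioi.2 (by positivity))
    (Set.mem_Ioi.2 (by positivity)) hseg).trans ?_
  rw [Gamma_nat_eq_factorial, Gamma_nat_eq_factorial, max_le_iff]
  exact ⟨mod_cast Nat.factorial_le m.le_succ, le_rfl⟩

lemma hasSum_pow_div_factorial_succ {y : ℝ} (hy : y ≠ 0) :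
    HasSum (fun m : ℕ => y ^ m / (m + 1)!) (y⁻¹ * (exp y - 1)) := by
  have hexp : HasSum (fun n : ℕ => y ^ n / n !) (exp y) := by
    rw [exp_eq_exp_ℝ]; exact NormedSpace.expSeries_div_hasSum_exp y
  have := ((hasSum_nat_add_iff' 1).2 hexp).mul_left y⁻¹
  simp only [Finset.range_one, Finset.sum_singleton, pow_zero, Nat.factorial_zero, Nat.cast_one,
    div_one] at this
  refine this.congr_fun fun m => ?_
  rw [pow_succ', mul_div_assoc, inv_mul_cancel_left₀ hy]

end Real

lemma strictMono_natCeil_mul {p : ℝ} (hp : 1 ≤ p) : StrictMono fun m : ℕ => ⌈p * m⌉₊ := by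
  refine strictMono_nat_of_lt_succ fun m => Nat.lt_ceil.2 ?_
  calc (⌈p * m⌉₊ : ℝ) < p * m + 1 := Nat.ceil_lt_add_one (by positivity)
    _ ≤ p * (m + 1 : ℕ) := by push_cast; linarith

lemma pow_div_factorial_succ_le_pow_natCeil_div_Gamma {ν x : ℝ} (hν0 : 0 < ν) (hν1 : ν ≤ 1)
    (hx : 1 ≤ x) (m : ℕ) :
    (x ^ ν⁻¹) ^ m / (m + 1)! ≤ x ^ ⌈ν⁻¹ * m⌉₊ / Gamma (⌈ν⁻¹ * m⌉₊ * ν + 1) := by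
  set n := ⌈ν⁻¹ * m⌉₊
  have hn : ν⁻¹ * m ≤ n := Nat.le_ceil _
  have hn' : n < ν⁻¹ * m + 1 := Nat.ceil_lt_add_one (by positivity)
  have hnum : (x ^ ν⁻¹) ^ m ≤ x ^ n := by
    rw [← rpow_natCast, ← rpow_mul (by linarith), ← rpow_natCast x n]
    exact rpow_le_rpow_of_exponent_le hx hn
  have hden : Gamma (n * ν + 1) ≤ (m + 1)! := by
    have hm : (m : ℝ) = ν⁻¹ * m * ν := by field_simp
    apply Gamma_add_one_le_factorial_succ <;> nlinarith
  exact div_le_div₀ (by positivity) hnum (Gamma_pos_of_pos (by positivity)) hden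

/-- Let `ν ∈ (0,1)`, `p = 1/ν`.  For every real `x > 1`,
`Σ_{k≥0} x^k / Γ(kν + 1) ≥ x^(−p) · (e^(x^p) − 1)`. -/
theorem series_lower_bound (nu : ℝ) (hnu : nu ∈ Set.Ioo (0 : ℝ) 1)
    (x : ℝ) (hx : 1 < x) :
    x ^ (-(1 / nu)) * (Real.exp (x ^ (1 / nu)) - 1)
      ≤ ∑' k : ℕ, x ^ k / Real.Gamma ((k : ℝ) * nu + 1) := by
  obtain ⟨hν0, hν1⟩ := hnu
  have hy : 0 < x ^ nu⁻¹ := rpow_pos_of_pos (by linarith) _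
  have hsum := hasSum_pow_div_factorial_succ hy.ne'
  rw [one_div, rpow_neg (by linarith), ← hsum.tsum_eq]
  refine hsum.summable.tsum_le_tsum_of_inj _ (strictMono_natCeil_mul ?_).injective
    (fun k _ => div_nonneg (by positivity) (Gamma_pos_of_pos (by positivity)).le)
    (pow_div_factorial_succ_le_pow_natCeil_div_Gamma hν0 hν1.le hx.le)
    (summable_pow_div_Gamma_mul_add_one hν0 x)
  exact (one_le_inv₀ hν0).2 hν1.le
end

section
/- Let d ≥ 2 be an integer, M > 0, μ > 0, and let q₁, …, q_d be nonnegative reals. Suppose there exist a constant C > 0 and real polynomials p₁, p₂ with positive coefficients such that C·R^{−d}·e^{(MR)^d} − p₁(R) ≤ e^{μ(q₁R + ⋯ + q_d R^d)} ≤ p₂(R)·e^{(MR)^d} for all sufficiently large R > 0. Then μ·q_d = M^d and q₁ = ⋯ = q_{d−1} = 0. -/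
open Filter Real

private lemma log_div_pow_tendsto {k : ℕ} (hk : k ≠ 0) :
    Tendsto (fun R : ℝ => Real.log R / R ^ k) atTop (nhds 0) := by
  have h1 : Tendsto (fun R : ℝ => Real.log R / R) atTop (nhds 0) :=
    Real.isLittleO_log_id_atTop.tendsto_div_nhds_zero
  refine squeeze_zero' ?_ ?_ h1
  · filter_upwards [eventually_ge_atTop (1:ℝ)] with R hR
    exact div_nonneg (Real.log_nonneg hR) (pow_nonneg (by linarith) k)
  · filter_upwards [eventually_ge_atTop (1:ℝ)] with R hR
    have hR0 : (0:ℝ) < R := by linarith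
    have h2 : R ≤ R ^ k := le_self_pow₀ hR hk
    exact div_le_div_of_nonneg_left (Real.log_nonneg hR) hR0 h2

private lemma poly_bound (p : Polynomial ℝ) (hp : p.PosCoeffs) :
    0 < ∑ i ∈ Finset.range (p.natDegree + 1), p.coeff i ∧
      ∀ R : ℝ, 1 ≤ R →
        p.eval R ≤ (∑ i ∈ Finset.range (p.natDegree + 1), p.coeff i) * R ^ p.natDegree := by
  have hc : ∀ i, 0 ≤ p.coeff i := by
    intro i
    by_cases h : i ∈ p.support
    · exact (hp.2 i h).le
    · simp [Polynomial.notMem_support_iff.mp h]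
  constructor
  · refine Finset.sum_pos' (fun i _ => hc i) ⟨p.natDegree, Finset.self_mem_range_succ _, ?_⟩
    exact hp.2 _ (p.natDegree_mem_support_of_nonzero hp.1)
  · intro R hR
    rw [Polynomial.eval_eq_sum_range, Finset.sum_mul]
    refine Finset.sum_le_sum fun i hi => ?_
    have hin : i ≤ p.natDegree := by
      have := Finset.mem_range.mp hi; omega
    exact mul_le_mul_of_nonneg_left (pow_le_pow_right₀ hR hin) (hc i)

set_option maxHeartbeats 1000000 in
/-- Let `d ≥ 2`, `M > 0`, `μ > 0`, and `q₁, …, q_d ≥ 0`.  If there are `C > 0` and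
polynomials `p₁, p₂` with positive coefficients such that
`C·R^(−d)·e^((MR)^d) − p₁(R) ≤ e^(μ(q₁R + ⋯ + q_d R^d)) ≤ p₂(R)·e^((MR)^d)` for all
sufficiently large `R > 0`, then `μ·q_d = M^d` and `q₁ = ⋯ = q_{d−1} = 0`. -/
theorem monomial_forced (d : ℕ) (hd : 2 ≤ d) (M μ : ℝ) (hM : 0 < M) (hμ : 0 < μ)
    (q : ℕ → ℝ) (hq : ∀ i ∈ Finset.Icc 1 d, 0 ≤ q i)
    (h : ∃ C : ℝ, 0 < C ∧ ∃ p₁ p₂ : Polynomial ℝ, p₁.PosCoeffs ∧ p₂.PosCoeffs ∧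
      ∃ R₀ : ℝ, 0 < R₀ ∧ ∀ R : ℝ, R₀ ≤ R →
        C / R ^ d * Real.exp ((M * R) ^ d) - p₁.eval R
            ≤ Real.exp (μ * ∑ i ∈ Finset.Icc 1 d, q i * R ^ i) ∧
          Real.exp (μ * ∑ i ∈ Finset.Icc 1 d, q i * R ^ i)
            ≤ p₂.eval R * Real.exp ((M * R) ^ d)) :
    μ * q d = M ^ d ∧ ∀ i, 1 ≤ i → i < d → q i = 0 := by
  obtain ⟨C, hC, p₁, p₂, hp₁, hp₂, R₀, hR₀, hbound⟩ := h
  obtain ⟨e, rfl⟩ : ∃ e, d = e + 1 := ⟨d - 1, by omega⟩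
  have he : 1 ≤ e := by omega
  set n := p₂.natDegree with hn
  set B := ∑ i ∈ Finset.range (p₂.natDegree + 1), p₂.coeff i with hBdef
  obtain ⟨hB, hp₂le⟩ := poly_bound p₂ hp₂
  set S : ℝ → ℝ := fun R => ∑ i ∈ Finset.Icc 1 (e+1), q i * R ^ i with hS
  -- upper bound on μ * S R
  have hub : ∀ᶠ R in atTop,
      μ * S R ≤ Real.log B + n * Real.log R + M ^ (e+1) * R ^ (e+1) := by
    filter_upwards [eventually_ge_atTop R₀, eventually_ge_atTop (1:ℝ)] with R hRR hR1
    have hR0 : (0:ℝ) < R := by linarith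
    have h2 := (hbound R hRR).2
    have h3 : p₂.eval R * Real.exp ((M * R) ^ (e+1))
        ≤ Real.exp (Real.log B + n * Real.log R + M ^ (e+1) * R ^ (e+1)) := by
      rw [Real.exp_add, Real.exp_add, Real.exp_log hB, Real.exp_nat_mul, Real.exp_log hR0,
        mul_pow]
      exact mul_le_mul_of_nonneg_right (hp₂le R hR1) (Real.exp_pos _).le
    exact Real.exp_le_exp.mp (h2.trans h3)
  -- lower bound on μ * S R
  have hpolyev : ∀ᶠ R in atTop, (p₁ * Polynomial.X ^ (e+1)).eval R / Real.exp R ≤ C / 2 :=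
    ((p₁ * Polynomial.X ^ (e+1)).tendsto_div_exp_atTop).eventually
      (eventually_le_nhds (by positivity))
  have hMRe : ∀ᶠ R in atTop, (1:ℝ) ≤ M ^ (e+1) * R ^ e := by
    refine Tendsto.eventually_ge_atTop ?_ 1
    exact Tendsto.const_mul_atTop (pow_pos hM _) (tendsto_pow_atTop (by omega))
  have hlb : ∀ᶠ R in atTop,
      Real.log (C/2) - ((e+1 : ℕ) : ℝ) * Real.log R + M ^ (e+1) * R ^ (e+1) ≤ μ * S R := by
    filter_upwards [eventually_ge_atTop R₀, eventually_ge_atTop (1:ℝ), hpolyev, hMRe]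
      with R hRR hR1 hpe hme
    have hR0 : (0:ℝ) < R := by linarith
    have hRd : (0:ℝ) < R ^ (e+1) := pow_pos hR0 _
    have h1 := (hbound R hRR).1
    rw [mul_pow] at h1
    have hexp : Real.exp R ≤ Real.exp (M ^ (e+1) * R ^ (e+1)) := by
      apply Real.exp_le_exp.mpr
      calc R = 1 * R := (one_mul R).symm
        _ ≤ M ^ (e+1) * R ^ e * R := mul_le_mul_of_nonneg_right hme hR0.le
        _ = M ^ (e+1) * R ^ (e+1) := by ring
    have hp1' : p₁.eval R ≤ C/2 / R ^ (e+1) * Real.exp (M ^ (e+1) * R ^ (e+1)) := by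
      rw [div_le_iff₀ (Real.exp_pos R)] at hpe
      rw [Polynomial.eval_mul, Polynomial.eval_pow, Polynomial.eval_X] at hpe
      rw [div_mul_eq_mul_div, le_div_iff₀ hRd]
      calc p₁.eval R * R ^ (e+1) ≤ C/2 * Real.exp R := hpe
        _ ≤ C/2 * Real.exp (M ^ (e+1) * R ^ (e+1)) :=
            mul_le_mul_of_nonneg_left hexp (by positivity)
    have key : Real.exp (Real.log (C/2) - ((e+1 : ℕ) : ℝ) * Real.log R + M ^ (e+1) * R ^ (e+1))
        = C/2 / R ^ (e+1) * Real.exp (M ^ (e+1) * R ^ (e+1)) := by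
      rw [Real.exp_add, Real.exp_sub, Real.exp_log (by positivity : (0:ℝ) < C/2),
        Real.exp_nat_mul, Real.exp_log hR0]
    have hfin : C/2 / R ^ (e+1) * Real.exp (M ^ (e+1) * R ^ (e+1)) ≤ Real.exp (μ * S R) := by
      have hring : C / R ^ (e+1) * Real.exp (M ^ (e+1) * R ^ (e+1))
          = 2 * (C/2 / R ^ (e+1) * Real.exp (M ^ (e+1) * R ^ (e+1))) := by ring
      linarith
    rw [← key] at hfin
    exact Real.exp_le_exp.mp hfin
  -- part 1a : μ q_d ≤ M^d
  have hqd_le : μ * q (e+1) ≤ M ^ (e+1) := by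
    have base : Tendsto (fun R : ℝ => Real.log B / R ^ (e+1) + ↑n * (Real.log R / R ^ (e+1))
        + M ^ (e+1)) atTop (nhds (0 + ↑n * 0 + M ^ (e+1))) :=
      ((tendsto_const_nhds.div_atTop (tendsto_pow_atTop (by omega))).add
        ((log_div_pow_tendsto (by omega)).const_mul _)).add tendsto_const_nhds
    have base' : Tendsto (fun R : ℝ => Real.log B / R ^ (e+1) + ↑n * (Real.log R / R ^ (e+1))
        + M ^ (e+1)) atTop (nhds (M ^ (e+1))) := by simpa using base
    have heq : (fun R : ℝ => Real.log B / R ^ (e+1) + ↑n * (Real.log R / R ^ (e+1)) + M ^ (e+1))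
        =ᶠ[atTop] fun R : ℝ =>
          (Real.log B + ↑n * Real.log R + M ^ (e+1) * R ^ (e+1)) / R ^ (e+1) := by
      filter_upwards [eventually_gt_atTop (0:ℝ)] with R hR0
      have : R ^ (e+1) ≠ 0 := (pow_pos hR0 _).ne'
      field_simp
    have hT := base'.congr' heq
    refine ge_of_tendsto hT ?_
    filter_upwards [hub, eventually_ge_atTop (1:ℝ)] with R hu hR1
    have hR0 : (0:ℝ) < R := by linarith
    have hRd : (0:ℝ) < R ^ (e+1) := pow_pos hR0 _
    have hqS : μ * (q (e+1) * R ^ (e+1)) ≤ μ * S R := by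
      refine mul_le_mul_of_nonneg_left ?_ hμ.le
      exact Finset.single_le_sum (f := fun i => q i * R ^ i)
        (fun i hi => mul_nonneg (hq i hi) (pow_nonneg hR0.le i))
        (Finset.mem_Icc.mpr ⟨by omega, le_refl _⟩)
    rw [le_div_iff₀ hRd]
    have hr : μ * q (e+1) * R ^ (e+1) = μ * (q (e+1) * R ^ (e+1)) := by ring
    linarith
  -- part 1b : μ q_d ≥ M^d
  set Q : ℝ := ∑ i ∈ Finset.Icc 1 e, q i with hQdef
  have hqd_ge : M ^ (e+1) ≤ μ * q (e+1) := by
    have base : Tendsto (fun R : ℝ => μ * q (e+1) + μ * Q / R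
        + ((e+1 : ℕ) : ℝ) * (Real.log R / R ^ (e+1)) - Real.log (C/2) / R ^ (e+1)) atTop
        (nhds (μ * q (e+1) + 0 + ((e+1 : ℕ) : ℝ) * 0 - 0)) := by
      refine Tendsto.sub (Tendsto.add (Tendsto.add tendsto_const_nhds ?_)
        ((log_div_pow_tendsto (by omega)).const_mul _))
        (tendsto_const_nhds.div_atTop (tendsto_pow_atTop (by omega)))
      exact tendsto_const_nhds.div_atTop tendsto_id
    have base' : Tendsto (fun R : ℝ => μ * q (e+1) + μ * Q / R
        + ((e+1 : ℕ) : ℝ) * (Real.log R / R ^ (e+1)) - Real.log (C/2) / R ^ (e+1)) atTop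
        (nhds (μ * q (e+1))) := by simpa using base
    have heq : (fun R : ℝ => μ * q (e+1) + μ * Q / R
        + ((e+1 : ℕ) : ℝ) * (Real.log R / R ^ (e+1)) - Real.log (C/2) / R ^ (e+1))
        =ᶠ[atTop] fun R : ℝ => (μ * q (e+1) * R ^ (e+1) + μ * Q * R ^ e
          + ((e+1 : ℕ) : ℝ) * Real.log R - Real.log (C/2)) / R ^ (e+1) := by
      filter_upwards [eventually_gt_atTop (0:ℝ)] with R hR0
      have h1 : R ≠ 0 := hR0.ne'
      field_simp
      ring
    have hT := base'.congr' heq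
    refine ge_of_tendsto hT ?_
    filter_upwards [hlb, eventually_ge_atTop (1:ℝ)] with R hl hR1
    have hR0 : (0:ℝ) < R := by linarith
    have hRd : (0:ℝ) < R ^ (e+1) := pow_pos hR0 _
    have hsplit : S R = (∑ i ∈ Finset.Icc 1 e, q i * R ^ i) + q (e+1) * R ^ (e+1) :=
      Finset.sum_Icc_succ_top (by omega) _
    have hQb : (∑ i ∈ Finset.Icc 1 e, q i * R ^ i) ≤ Q * R ^ e := by
      rw [hQdef, Finset.sum_mul]
      refine Finset.sum_le_sum fun i hi => ?_
      have hi' : i ∈ Finset.Icc 1 (e+1) := by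
        have := Finset.mem_Icc.mp hi; exact Finset.mem_Icc.mpr ⟨this.1, by omega⟩
      have hie : i ≤ e := (Finset.mem_Icc.mp hi).2
      exact mul_le_mul_of_nonneg_left (pow_le_pow_right₀ hR1 hie) (hq i hi')
    have hSb : μ * S R ≤ μ * q (e+1) * R ^ (e+1) + μ * Q * R ^ e := by
      rw [hsplit]
      nlinarith [mul_le_mul_of_nonneg_left hQb hμ.le]
    rw [le_div_iff₀ hRd]
    linarith
  have hqd : μ * q (e+1) = M ^ (e+1) := le_antisymm hqd_le hqd_ge
  refine ⟨hqd, fun i hi1 hid => ?_⟩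
  -- part 2 : lower coefficients vanish
  have hqi : μ * q i ≤ 0 := by
    have hi0 : i ≠ 0 := by omega
    have b1 : Tendsto (fun R : ℝ => Real.log B / R ^ i) atTop (nhds 0) :=
      tendsto_const_nhds.div_atTop (tendsto_pow_atTop hi0)
    have b2 : Tendsto (fun R : ℝ => (n:ℝ) * (Real.log R / R ^ i)) atTop (nhds ((n:ℝ) * 0)) :=
      (log_div_pow_tendsto hi0).const_mul _
    have hT : Tendsto (fun R : ℝ => (Real.log B + (n:ℝ) * Real.log R) / R ^ i) atTop
        (nhds 0) := by
      have h3 := b1.add b2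
      rw [mul_zero, add_zero] at h3
      exact h3.congr fun R => by rw [add_div, mul_div_assoc]
    refine ge_of_tendsto hT ?_
    filter_upwards [hub, eventually_ge_atTop (1:ℝ)] with R hu hR1
    have hR0 : (0:ℝ) < R := by linarith
    have hRi : (0:ℝ) < R ^ i := pow_pos hR0 _
    have hsub : ({i, e+1} : Finset ℕ) ⊆ Finset.Icc 1 (e+1) := by
      intro j hj
      simp only [Finset.mem_insert, Finset.mem_singleton] at hj
      rcases hj with rfl | rfl <;> exact Finset.mem_Icc.mpr ⟨by omega, by omega⟩
    have hsum : q i * R ^ i + q (e+1) * R ^ (e+1) ≤ S R := by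
      have := Finset.sum_le_sum_of_subset_of_nonneg hsub
        (fun j hj _ => mul_nonneg (hq j hj) (pow_nonneg hR0.le j))
      rwa [Finset.sum_pair (by omega : i ≠ e+1)] at this
    have h1 : μ * (q i * R ^ i + q (e+1) * R ^ (e+1)) ≤ μ * S R :=
      mul_le_mul_of_nonneg_left hsum hμ.le
    have h2 : μ * (q (e+1) * R ^ (e+1)) = M ^ (e+1) * R ^ (e+1) := by
      rw [← hqd]; ring
    rw [le_div_iff₀ hRi]
    nlinarith
  have hge : 0 ≤ q i := hq i (Finset.mem_Icc.mpr ⟨hi1, by omega⟩)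
  nlinarith
end
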